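/- arXiv:1508.01101 — 5 statements merged into one kernel-verified Lean document; each statement's English description precedes it below -/
import Mathlib

section
/- Let (μ_n) be a sequence of probability measures on ℝ with all moments finite, and suppose m_r = lim_{n→∞} ∫ x^r dμ_n(x) exists for every r ∈ ℕ. Then there exists a probability measure μ on ℝ whose r-th moment equals m_r for all r. -/
open MeasureTheory Filter

section Helpers
open Set ENNReal Topology

lemma key_identity (f : StieltjesFunction ℝ) (hc : Continuous f) (a b : ℝ)
    (ha : ∀ x, x ≤ a → f x = f a) (hb : ∀ x, b ≤ x → f x = f b)
    (μ : Measure ℝ) [IsProbabilityMeasure μ] :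
    ∫ x, f x ∂μ = f a + (∫⁻ t, μ (Ioi t) ∂(f.measure.restrict (Ioc a b))).toReal := by
  have hfa : ∀ x, f a ≤ f x := by
    intro x
    rcases le_total x a with h | h
    · rw [ha x h]
    · exact f.mono h
  have hfb : ∀ x, f x ≤ f b := by
    intro x
    rcases le_total b x with h | h
    · rw [hb x h]
    · exact f.mono h
  set Λ := f.measure.restrict (Ioc a b) with hΛ
  have hΛfin : IsFiniteMeasure Λ := by
    constructor
    rw [hΛ, Measure.restrict_apply_univ, f.measure_Ioc]
    exact ofReal_lt_top
  have hleft : ∀ x : ℝ, Function.leftLim f x = f x := by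
    intro x
    exact leftLim_eq_of_tendsto
      ((hc.tendsto x).mono_left nhdsWithin_le_nhds)
  have step1 : ∀ x : ℝ, Λ (Iio x) = ENNReal.ofReal (f x - f a) := by
    intro x
    rw [hΛ, Measure.restrict_apply measurableSet_Iio]
    rcases le_or_gt x a with h | h
    · have : Iio x ∩ Ioc a b = ∅ := by
        ext t; simp only [mem_inter_iff, mem_Iio, mem_Ioc, mem_empty_iff_false, iff_false]
        rintro ⟨h1, h2, h3⟩; linarith
      rw [this, measure_empty, ha x h, sub_self, ofReal_zero]
    · rcases le_or_gt x b with h' | h'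
      · have : Iio x ∩ Ioc a b = Ioo a x := by
          ext t; simp only [mem_inter_iff, mem_Iio, mem_Ioc, mem_Ioo]
          constructor
          · rintro ⟨h1, h2, h3⟩; exact ⟨h2, h1⟩
          · rintro ⟨h1, h2⟩; exact ⟨h2, h1, by linarith⟩
        rw [this, f.measure_Ioo, hleft x]
      · have : Iio x ∩ Ioc a b = Ioc a b := by
          apply inter_eq_right.mpr
          intro t ht; exact lt_of_le_of_lt ht.2 h'
        rw [this, f.measure_Ioc, hb x h'.le]
  have hs : MeasurableSet {p : ℝ × ℝ | p.2 < p.1} :=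
    measurableSet_lt measurable_snd measurable_fst
  have step2 : ∫⁻ x, Λ (Iio x) ∂μ = ∫⁻ t, μ (Ioi t) ∂Λ := by
    have e1 : ∀ x : ℝ, Λ (Iio x)
        = ∫⁻ t, {p : ℝ × ℝ | p.2 < p.1}.indicator 1 (x, t) ∂Λ := by
      intro x
      rw [← lintegral_indicator_one (measurableSet_Iio (a := x))]
      refine lintegral_congr fun t => ?_
      simp [Set.indicator_apply]
    have e2 : ∀ t : ℝ, μ (Ioi t)
        = ∫⁻ x, {p : ℝ × ℝ | p.2 < p.1}.indicator 1 (x, t) ∂μ := by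
      intro t
      rw [← lintegral_indicator_one (measurableSet_Ioi (a := t))]
      refine lintegral_congr fun x => ?_
      simp [Set.indicator_apply]
    simp_rw [e1, e2]
    exact lintegral_lintegral_swap ((measurable_const.indicator hs).aemeasurable)
  have hintf : Integrable (fun x => f x) μ := by
    refine Integrable.mono' (integrable_const (max |f a| |f b|)) hc.aestronglyMeasurable
      (ae_of_all _ fun x => ?_)
    rw [Real.norm_eq_abs, abs_le]
    constructor
    · calc -max |f a| |f b| ≤ -|f a| := by simp [neg_le_neg_iff]
        _ ≤ f a := neg_abs_le _
        _ ≤ f x := hfa x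
    · calc f x ≤ f b := hfb x
        _ ≤ |f b| := le_abs_self _
        _ ≤ max |f a| |f b| := le_max_right _ _
  have step3 : ∫ x, f x ∂μ = f a + ∫ x, (f x - f a) ∂μ := by
    rw [integral_sub hintf (integrable_const _), integral_const]
    simp [measure_univ]
  have step4 : ∫ x, (f x - f a) ∂μ = (∫⁻ x, ENNReal.ofReal (f x - f a) ∂μ).toReal := by
    exact integral_eq_lintegral_of_nonneg_ae (ae_of_all _ fun x => sub_nonneg.mpr (hfa x))
      ((hc.sub continuous_const).aestronglyMeasurable)
  rw [step3, step4]
  congr 1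
  rw [← step2]
  exact congrArg ENNReal.toReal (lintegral_congr fun x => (step1 x).symm)

lemma tendsto_integral_of_cdf (ρ : ℕ → Measure ℝ) (hρ : ∀ n, IsProbabilityMeasure (ρ n))
    (G : StieltjesFunction ℝ) (hG0 : Tendsto G atBot (𝓝 0)) (hG1 : Tendsto G atTop (𝓝 1))
    (hcdf : ∀ x : ℝ, ContinuousAt G x →
      Tendsto (fun n => ((ρ n) (Iic x)).toReal) atTop (𝓝 (G x)))
    (f : StieltjesFunction ℝ) (hc : Continuous f) (a b : ℝ)
    (ha : ∀ x, x ≤ a → f x = f a) (hb : ∀ x, b ≤ x → f x = f b) :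
    Tendsto (fun n => ∫ x, f x ∂(ρ n)) atTop (𝓝 (∫ x, f x ∂G.measure)) := by
  have hGprob : IsProbabilityMeasure G.measure := G.isProbabilityMeasure hG0 hG1
  have hG01 : ∀ x, 0 ≤ G x ∧ G x ≤ 1 := by
    intro x
    constructor
    · exact le_of_tendsto hG0 (eventually_le_atBot x |>.mono fun y hy => G.mono hy)
    · exact ge_of_tendsto hG1 (eventually_ge_atTop x |>.mono fun y hy => G.mono hy)
  set Λ := f.measure.restrict (Ioc a b) with hΛdef
  have hΛfin : IsFiniteMeasure Λ := by
    constructor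
    rw [hΛdef, Measure.restrict_apply_univ, f.measure_Ioc]
    exact ofReal_lt_top
  have hleft : ∀ x : ℝ, Function.leftLim f x = f x := fun x =>
    leftLim_eq_of_tendsto
      ((hc.tendsto x).mono_left nhdsWithin_le_nhds)
  have hNoAtoms : NullSingletonClass Λ := by
    constructor
    intro x
    have h1 : Λ {x} ≤ f.measure {x} := by
      rw [hΛdef, Measure.restrict_apply (measurableSet_singleton x)]
      exact measure_mono inter_subset_left
    rwa [f.measure_singleton, hleft x, sub_self, ofReal_zero, le_zero_iff] at h1
  -- measurability of t ↦ μ (Ioi t)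
  have hmeas : ∀ (μ : Measure ℝ), Measurable (fun t => μ (Ioi t)) := by
    intro μ
    exact Antitone.measurable fun s t hst => measure_mono (Ioi_subset_Ioi hst)
  have haux : ∀ (μ : Measure ℝ) [IsProbabilityMeasure μ],
      (∫⁻ t, μ (Ioi t) ∂Λ).toReal = ∫ t, (μ (Ioi t)).toReal ∂Λ := by
    intro μ _
    rw [integral_toReal ((hmeas μ).aemeasurable)
      (ae_of_all _ fun t => lt_of_le_of_lt prob_le_one one_lt_top)]
  -- pointwise: at continuity points
  have hIoi : ∀ (μ : Measure ℝ) [IsProbabilityMeasure μ], ∀ t : ℝ,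
      (μ (Ioi t)).toReal = 1 - (μ (Iic t)).toReal := by
    intro μ _ t
    rw [← compl_Iic, measure_compl measurableSet_Iic (measure_ne_top _ _), measure_univ,
      ENNReal.toReal_sub_of_le prob_le_one one_ne_top, ENNReal.toReal_one]
  have hkey : ∀ n, ∫ x, f x ∂(ρ n) = f a + ∫ t, ((ρ n) (Ioi t)).toReal ∂Λ := fun n => by
    haveI := hρ n
    rw [key_identity f hc a b ha hb (ρ n), haux (ρ n)]
  have hkeyG : ∫ x, f x ∂G.measure = f a + ∫ t, (G.measure (Ioi t)).toReal ∂Λ := by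
    rw [key_identity f hc a b ha hb G.measure, haux G.measure]
  rw [hkeyG]
  simp_rw [hkey]
  refine Tendsto.const_add _ ?_
  refine tendsto_integral_of_dominated_convergence (fun _ => (1:ℝ)) ?_ (integrable_const 1) ?_ ?_
  · intro n
    exact ((hmeas (ρ n)).ennreal_toReal).aestronglyMeasurable
  · intro n
    refine ae_of_all _ fun t => ?_
    haveI := hρ n
    rw [Real.norm_eq_abs, abs_of_nonneg ENNReal.toReal_nonneg]
    simpa using ENNReal.toReal_mono one_ne_top (prob_le_one (μ := ρ n) (s := Ioi t))
  · have hae : ∀ᵐ t ∂Λ, ContinuousAt G t :=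
      ae_iff.mpr (Set.Countable.measure_zero G.mono.countable_not_continuousAt _)
    filter_upwards [hae] with t ht
    have h1 : ∀ n, ((ρ n) (Ioi t)).toReal = 1 - ((ρ n) (Iic t)).toReal := fun n => by
      haveI := hρ n
      exact hIoi (ρ n) t
    have h2 : (G.measure (Ioi t)).toReal = 1 - G t := by
      rw [hIoi G.measure t, G.measure_Iic hG0 t, sub_zero,
        ENNReal.toReal_ofReal (hG01 t).1]
    simp only [h1, h2]
    exact Tendsto.const_sub 1 (hcdf t ht)

lemma build_G (gr : ℚ → ℝ) (hmono : ∀ q q' : ℚ, q ≤ q' → gr q ≤ gr q')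
    (h0 : ∀ q, 0 ≤ gr q) (h1 : ∀ q, gr q ≤ 1) :
    ∃ G : StieltjesFunction ℝ, (∀ (x : ℝ) (q : ℚ), x < q → G x ≤ gr q) ∧
      (∀ (x : ℝ) (q : ℚ), (q : ℝ) ≤ x → gr q ≤ G x) ∧ (∀ x, 0 ≤ G x) ∧ (∀ x, G x ≤ 1) ∧
      (∀ (x : ℝ) (ε : ℝ), 0 < ε → ∃ q : ℚ, x < (q : ℝ) ∧ gr q < G x + ε) := by
  have ne : ∀ x : ℝ, Nonempty {q : ℚ // x < (q : ℝ)} := fun x =>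
    let ⟨q, hq⟩ := exists_rat_gt x; ⟨⟨q, hq⟩⟩
  set Gfun : ℝ → ℝ := fun x => ⨅ q : {q : ℚ // x < (q : ℝ)}, gr q.1 with hGdef
  have bdd : ∀ x : ℝ, BddBelow (range fun q : {q : ℚ // x < (q : ℝ)} => gr q.1) := fun x =>
    ⟨0, by rintro y ⟨q, rfl⟩; exact h0 _⟩
  have hle : ∀ (x : ℝ) (q : ℚ), x < q → Gfun x ≤ gr q := fun x q h =>
    ciInf_le (bdd x) ⟨q, h⟩
  have hge : ∀ (x : ℝ) (q : ℚ), (q : ℝ) ≤ x → gr q ≤ Gfun x := by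
    intro x q h
    haveI := ne x
    refine le_ciInf fun p => hmono q p.1 ?_
    exact_mod_cast (h.trans_lt p.2).le
  have h0' : ∀ x, 0 ≤ Gfun x := fun x => by
    haveI := ne x
    exact le_ciInf fun p => h0 _
  have h1' : ∀ x, Gfun x ≤ 1 := fun x => by
    obtain ⟨q, hq⟩ := exists_rat_gt x
    exact (hle x q hq).trans (h1 q)
  have hmonoG : Monotone Gfun := by
    intro x y hxy
    haveI := ne y
    exact le_ciInf fun q => hle x q.1 (lt_of_le_of_lt hxy q.2)
  have happrox : ∀ (x : ℝ) (ε : ℝ), 0 < ε → ∃ q : ℚ, x < q ∧ gr q < Gfun x + ε := by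
    intro x ε hε
    haveI := ne x
    obtain ⟨⟨q, hq⟩, hlt⟩ := exists_lt_of_ciInf_lt (show Gfun x < Gfun x + ε by linarith)
    exact ⟨q, hq, hlt⟩
  have hrc : ∀ x, ContinuousWithinAt Gfun (Ici x) x := by
    intro x
    rw [ContinuousWithinAt, tendsto_order]
    constructor
    · intro a ha
      exact eventually_mem_nhdsWithin.mono fun y hy => lt_of_lt_of_le ha (hmonoG hy)
    · intro a ha
      obtain ⟨q, hq, hlt⟩ := happrox x (a - Gfun x) (by linarith)
      have hmem : Iio ((q : ℝ)) ∈ 𝓝[Ici x] x := mem_nhdsWithin_of_mem_nhds (Iio_mem_nhds hq)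
      exact Filter.eventually_iff_exists_mem.mpr ⟨_, hmem, fun y hy =>
        lt_of_le_of_lt (hle y q hy) (by linarith)⟩
  exact ⟨⟨Gfun, hmonoG, hrc⟩, hle, hge, h0', h1', happrox⟩

lemma clamp_tendsto (ρ : ℕ → Measure ℝ) (hρ : ∀ n, IsProbabilityMeasure (ρ n))
    (G : StieltjesFunction ℝ) (hG0 : Tendsto G atBot (𝓝 0)) (hG1 : Tendsto G atTop (𝓝 1))
    (hcdf : ∀ x : ℝ, ContinuousAt G x →
      Tendsto (fun n => ((ρ n) (Iic x)).toReal) atTop (𝓝 (G x)))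
    (S : ℝ) (hS : 0 < S) (r : ℕ) :
    Tendsto (fun n => ∫ x, (max (-S) (min x S)) ^ r ∂(ρ n)) atTop
      (𝓝 (∫ x, (max (-S) (min x S)) ^ r ∂G.measure)) := by
  have hGprob : IsProbabilityMeasure G.measure := G.isProbabilityMeasure hG0 hG1
  have hclm : Monotone fun x : ℝ => max (-S) (min x S) :=
    fun a b h => max_le_max le_rfl (min_le_min h le_rfl)
  have hclc : Continuous fun x : ℝ => max (-S) (min x S) :=
    continuous_const.max (continuous_id.min continuous_const)
  have hcla : ∀ x : ℝ, x ≤ -S → max (-S) (min x S) = max (-S) (min (-S) S) := by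
    intro x hx
    rw [min_eq_left (hx.trans (by linarith)), min_eq_left (by linarith),
      max_eq_left hx, max_self]
  have hclb : ∀ x : ℝ, S ≤ x → max (-S) (min x S) = max (-S) (min S S) := by
    intro x hx
    rw [min_eq_right hx, min_self]
  rcases Nat.even_or_odd r with hev | hodd
  · rcases Nat.eq_zero_or_pos r with hr0 | hrpos
    · subst hr0
      simp only [pow_zero]
      have h1 : ∀ (μ : Measure ℝ) [IsProbabilityMeasure μ], ∫ (_ : ℝ), (1:ℝ) ∂μ = 1 := by
        intro μ _; simp
      simp only [h1 (G.measure)]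
      have : ∀ n, ∫ (_ : ℝ), (1:ℝ) ∂(ρ n) = 1 := fun n => by
        haveI := hρ n; simp
      simp only [this]
      exact tendsto_const_nhds
    · -- even, r ≥ 1 : decompose
      set u : ℝ → ℝ := fun x => (min (max x 0) S) ^ r with hudef
      have humono : Monotone u := fun a b h =>
        pow_le_pow_left₀ (le_min (le_max_right _ _) hS.le)
          (min_le_min (max_le_max h le_rfl) le_rfl) r
      have hucont : Continuous u := (((continuous_id.max continuous_const).min
        continuous_const).pow r)
      have hu0 : ∀ x : ℝ, x ≤ 0 → u x = 0 := by
        intro x hx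
        rw [hudef]
        simp only [max_eq_right hx, min_eq_left hS.le, zero_pow (Nat.pos_iff_ne_zero.mp hrpos)]
      have huS : ∀ x : ℝ, S ≤ x → u x = S ^ r := by
        intro x hx
        rw [hudef]
        simp only [min_eq_right ((le_max_left _ _).trans_eq' (max_eq_left (hS.le.trans hx)).symm)]
        congr 1
        rw [max_eq_left (hS.le.trans hx), min_eq_right hx]
      have hvmono : Monotone fun x : ℝ => S ^ r - u (-x) := by
        intro a b h
        have := humono (neg_le_neg h)
        simpa using sub_le_sub_left this (S ^ r)
      have hvcont : Continuous fun x : ℝ => S ^ r - u (-x) :=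
        continuous_const.sub (hucont.comp continuous_neg)
      have hdecomp : ∀ x : ℝ, (max (-S) (min x S)) ^ r = u x + u (-x) := by
        intro x
        rcases le_total 0 x with hx | hx
        · rw [hu0 (-x) (by linarith), add_zero, hudef]
          simp only [max_eq_left hx]
          congr 2
          exact max_eq_right (le_min (by linarith) (by linarith))
        · rw [hu0 x hx, zero_add, hudef]
          simp only [max_eq_left (show (0:ℝ) ≤ -x by linarith)]
          rw [min_eq_left (show x ≤ S by linarith)]
          have h1 : min (-x) S = -(max (-S) x) := by
            rw [← min_neg_neg, neg_neg, min_comm]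
          rw [h1, hev.neg_pow]
      have hubd : ∀ x : ℝ, ‖u x‖ ≤ S ^ r := by
        intro x
        rw [hudef, Real.norm_eq_abs,
          abs_of_nonneg (pow_nonneg (le_min (le_max_right _ _) hS.le) r)]
        exact pow_le_pow_left₀ (le_min (le_max_right _ _) hS.le) (min_le_right _ _) r
      have hint_u : ∀ (μ : Measure ℝ) [IsProbabilityMeasure μ], Integrable u μ :=
        fun μ _ => Integrable.mono' (integrable_const (S ^ r)) hucont.aestronglyMeasurable
          (ae_of_all _ hubd)
      have hint_v : ∀ (μ : Measure ℝ) [IsProbabilityMeasure μ],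
          Integrable (fun x => u (-x)) μ :=
        fun μ _ => Integrable.mono' (integrable_const (S ^ r))
          (hucont.comp continuous_neg).aestronglyMeasurable (ae_of_all _ fun x => hubd (-x))
      set f₁ : StieltjesFunction ℝ :=
        { toFun := u
          mono' := humono
          right_continuous' := fun x => hucont.continuousAt.continuousWithinAt } with hf₁
      have tendsto₁ := tendsto_integral_of_cdf ρ hρ G hG0 hG1 hcdf f₁ hucont 0 S
        (fun x hx => (hu0 x hx).trans (hu0 0 le_rfl).symm)
        (fun x hx => (huS x hx).trans (huS S le_rfl).symm)
      set f₂ : StieltjesFunction ℝ :=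
        { toFun := fun x => S ^ r - u (-x)
          mono' := hvmono
          right_continuous' := fun x => hvcont.continuousAt.continuousWithinAt } with hf₂
      have tendsto₂ := tendsto_integral_of_cdf ρ hρ G hG0 hG1 hcdf f₂ hvcont (-S) 0
        (fun x hx => by
          show S ^ r - u (-x) = S ^ r - u (-(-S))
          rw [huS (-x) (by linarith), huS (-(-S)) (by rw [neg_neg])])
        (fun x hx => by
          show S ^ r - u (-x) = S ^ r - u (-0)
          rw [hu0 (-x) (by linarith), hu0 (-0) (by rw [neg_zero])])
      have hsub : ∀ (μ : Measure ℝ) [IsProbabilityMeasure μ],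
          ∫ x, (S ^ r - u (-x)) ∂μ = S ^ r - ∫ x, u (-x) ∂μ := by
        intro μ _
        rw [integral_sub (integrable_const _) (hint_v μ), integral_const]
        simp
      have hf₂eq : ∀ (μ : Measure ℝ) [IsProbabilityMeasure μ],
          ∫ x, f₂ x ∂μ = S ^ r - ∫ x, u (-x) ∂μ := fun μ _ => hsub μ
      have tendsto₂' : Tendsto (fun n => ∫ x, u (-x) ∂(ρ n)) atTop
          (𝓝 (∫ x, u (-x) ∂G.measure)) := by
        have h1 : ∀ n, ∫ x, u (-x) ∂(ρ n) = S ^ r - ∫ x, f₂ x ∂(ρ n) := fun n => by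
          haveI := hρ n
          rw [hf₂eq (ρ n)]; ring
        have h2 : ∫ x, u (-x) ∂G.measure = S ^ r - ∫ x, f₂ x ∂G.measure := by
          rw [hf₂eq G.measure]; ring
        simp only [h1, h2]
        exact tendsto_const_nhds.sub tendsto₂
      have hintadd : ∀ (μ : Measure ℝ) [IsProbabilityMeasure μ],
          ∫ x, (max (-S) (min x S)) ^ r ∂μ = (∫ x, u x ∂μ) + ∫ x, u (-x) ∂μ := by
        intro μ _
        rw [← integral_add (hint_u μ) (hint_v μ)]
        exact integral_congr_ae (ae_of_all _ fun x => hdecomp x)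
      have hGeq := hintadd G.measure
      have hρeq : ∀ n, ∫ x, (max (-S) (min x S)) ^ r ∂(ρ n)
          = (∫ x, u x ∂(ρ n)) + ∫ x, u (-x) ∂(ρ n) := fun n => by
        haveI := hρ n
        exact hintadd (ρ n)
      simp only [hρeq, hGeq]
      exact Tendsto.add tendsto₁ tendsto₂'
  · -- odd case
    set f : StieltjesFunction ℝ :=
      { toFun := fun x => (max (-S) (min x S)) ^ r
        mono' := (hodd.strictMono_pow (R := ℝ)).monotone.comp hclm
        right_continuous' := fun x => ((hclc.pow r).continuousAt).continuousWithinAt } with hfdef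
    have := tendsto_integral_of_cdf ρ hρ G hG0 hG1 hcdf f (hclc.pow r) (-S) S
      (fun x hx => congrArg (· ^ r) ((hcla x hx).trans (hcla (-S) le_rfl).symm))
      (fun x hx => congrArg (· ^ r) ((hclb x hx).trans (hclb S le_rfl).symm))
    exact this

lemma pointwise_tail (r : ℕ) (S : ℝ) (hS : 1 ≤ S) (x : ℝ) :
    |x ^ r - (max (-S) (min x S)) ^ r| ≤ 2 * x ^ (2 * r) / S ^ r := by
  have hS0 : (0:ℝ) < S := lt_of_lt_of_le one_pos hS
  have hSr : (0:ℝ) < S ^ r := pow_pos hS0 r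
  have hx2r : (0:ℝ) ≤ x ^ (2 * r) := by
    rw [pow_mul]
    exact pow_nonneg (sq_nonneg x) r
  rcases le_or_gt |x| S with h | h
  · have hcl : max (-S) (min x S) = x := by
      rw [abs_le] at h
      rw [min_eq_left h.2, max_eq_right h.1]
    rw [hcl, sub_self, abs_zero]
    positivity
  · have habs : |max (-S) (min x S)| ≤ S := by
      rw [abs_le]
      constructor
      · exact le_max_left _ _
      · exact max_le (by linarith) (min_le_right _ _)
    have h1 : |x ^ r - (max (-S) (min x S)) ^ r| ≤ |x| ^ r + S ^ r := by
      calc |x ^ r - (max (-S) (min x S)) ^ r|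
          ≤ |x ^ r| + |(max (-S) (min x S)) ^ r| := abs_sub _ _
        _ = |x| ^ r + |max (-S) (min x S)| ^ r := by rw [abs_pow, abs_pow]
        _ ≤ |x| ^ r + S ^ r := by
            have := pow_le_pow_left₀ (abs_nonneg _) habs r
            linarith
    have h2 : S ^ r ≤ |x| ^ r := pow_le_pow_left₀ hS0.le h.le r
    have h3 : |x| ^ r * S ^ r ≤ x ^ (2 * r) := by
      have : |x| ^ r * |x| ^ r = x ^ (2 * r) := by
        rw [← pow_add, ← abs_pow, ← two_mul, abs_of_nonneg hx2r]
      calc |x| ^ r * S ^ r ≤ |x| ^ r * |x| ^ r :=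
            mul_le_mul_of_nonneg_left h2 (pow_nonneg (abs_nonneg x) r)
        _ = x ^ (2 * r) := this
    calc |x ^ r - (max (-S) (min x S)) ^ r| ≤ |x| ^ r + S ^ r := h1
      _ ≤ 2 * |x| ^ r := by linarith
      _ ≤ 2 * (x ^ (2 * r) / S ^ r) := by
          gcongr 2 * ?_
          rw [le_div_iff₀ hSr]
          exact h3
      _ = 2 * x ^ (2 * r) / S ^ r := by ring

lemma clamp_integrable (μ : Measure ℝ) [IsProbabilityMeasure μ] (r : ℕ) (S : ℝ) (hS : 0 < S) :
    Integrable (fun x => (max (-S) (min x S)) ^ r) μ := by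
  refine Integrable.mono' (integrable_const (S ^ r))
    ((continuous_const.max (continuous_id.min continuous_const)).pow r).aestronglyMeasurable
    (ae_of_all _ fun x => ?_)
  rw [Real.norm_eq_abs, abs_pow]
  refine pow_le_pow_left₀ (abs_nonneg _) ?_ r
  rw [abs_le]
  exact ⟨le_max_left _ _, max_le (by linarith) (min_le_right _ _)⟩

lemma integral_tail (μ : Measure ℝ) [IsProbabilityMeasure μ] (r : ℕ) (S : ℝ) (hS : 1 ≤ S)
    (hint1 : Integrable (fun x => x ^ r) μ) (hint2 : Integrable (fun x => x ^ (2 * r)) μ) :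
    |∫ x, x ^ r ∂μ - ∫ x, (max (-S) (min x S)) ^ r ∂μ| ≤ 2 * (∫ x, x ^ (2 * r) ∂μ) / S ^ r := by
  have hS0 : (0:ℝ) < S := lt_of_lt_of_le one_pos hS
  have hcl := clamp_integrable μ r S hS0
  rw [← integral_sub hint1 hcl]
  calc |∫ x, (x ^ r - (max (-S) (min x S)) ^ r) ∂μ|
      ≤ ∫ x, |x ^ r - (max (-S) (min x S)) ^ r| ∂μ := by
        simpa [Real.norm_eq_abs] using
          norm_integral_le_integral_norm (fun x => x ^ r - (max (-S) (min x S)) ^ r) (μ := μ)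
    _ ≤ ∫ x, 2 * x ^ (2 * r) / S ^ r ∂μ := by
        refine integral_mono (hint1.sub hcl).abs ?_ fun x => pointwise_tail r S hS x
        exact ((hint2.const_mul 2).div_const _)
    _ = 2 * (∫ x, x ^ (2 * r) ∂μ) / S ^ r := by
        rw [integral_div, integral_const_mul]

lemma cdf_tendsto (ρ : ℕ → Measure ℝ) (hρ : ∀ n, IsProbabilityMeasure (ρ n))
    (gr : ℚ → ℝ) (G : StieltjesFunction ℝ)
    (hgle : ∀ (x : ℝ) (q : ℚ), x < (q : ℝ) → G x ≤ gr q)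
    (happrox : ∀ (x ε : ℝ), 0 < ε → ∃ q : ℚ, x < (q : ℝ) ∧ gr q < G x + ε)
    (hlim : ∀ q : ℚ, Tendsto (fun n => ((ρ n) (Iic (q : ℝ))).toReal) atTop (𝓝 (gr q)))
    (x : ℝ) (hx : ContinuousAt G x) :
    Tendsto (fun n => ((ρ n) (Iic x)).toReal) atTop (𝓝 (G x)) := by
  rw [Metric.tendsto_atTop]
  intro ε hε
  obtain ⟨q, hq, hq2⟩ := happrox x (ε / 2) (by linarith)
  obtain ⟨δ, hδ, hδ2⟩ := Metric.continuousAt_iff.mp hx (ε / 2) (by linarith)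
  obtain ⟨p, hp1, hp2⟩ := exists_rat_btwn (show x - δ / 2 < x by linarith)
  have hGp : G x - ε / 2 < gr p := by
    have h1 : dist (G (x - δ / 2)) (G x) < ε / 2 := by
      apply hδ2
      rw [Real.dist_eq, abs_of_nonpos (by linarith)]
      linarith
    have h2 : G (x - δ / 2) ≤ gr p := hgle _ p hp1
    rw [Real.dist_eq, abs_lt] at h1
    linarith
  have hη₁ : (0:ℝ) < G x + ε - gr q := by linarith
  have hη₂ : (0:ℝ) < gr p - (G x - ε) := by linarith
  obtain ⟨N₁, hN₁⟩ := Metric.tendsto_atTop.mp (hlim q) _ hη₁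
  obtain ⟨N₂, hN₂⟩ := Metric.tendsto_atTop.mp (hlim p) _ hη₂
  refine ⟨max N₁ N₂, fun n hn => ?_⟩
  haveI := hρ n
  have h1 := hN₁ n (le_of_max_le_left hn)
  have h2 := hN₂ n (le_of_max_le_right hn)
  rw [Real.dist_eq, abs_lt] at h1 h2 ⊢
  have hmono1 : ((ρ n) (Iic ((p : ℝ)))).toReal ≤ ((ρ n) (Iic x)).toReal :=
    ENNReal.toReal_mono (measure_ne_top _ _) (measure_mono (Iic_subset_Iic.mpr hp2.le))
  have hmono2 : ((ρ n) (Iic x)).toReal ≤ ((ρ n) (Iic ((q : ℝ)))).toReal :=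
    ENNReal.toReal_mono (measure_ne_top _ _) (measure_mono (Iic_subset_Iic.mpr hq.le))
  constructor <;> [skip; skip] <;> first
    | linarith [h1.1, h1.2, h2.1, h2.2]
end Helpers

open Set ENNReal Topology in
/-- If all moments of a sequence of probability measures on ℝ converge, then there
exists a probability measure whose moments are the limits. -/
theorem exists_measure_of_moment_convergence
    (μ : ℕ → Measure ℝ) (hprob : ∀ n, IsProbabilityMeasure (μ n))
    (hint : ∀ n, ∀ r : ℕ, Integrable (fun x => x ^ r) (μ n))
    (m : ℕ → ℝ)
    (hconv : ∀ r : ℕ, Tendsto (fun n => ∫ x, x ^ r ∂(μ n)) atTop (nhds (m r))) :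
    ∃ ν : Measure ℝ, IsProbabilityMeasure ν ∧
      (∀ r : ℕ, Integrable (fun x => x ^ r) ν) ∧
      (∀ r : ℕ, ∫ x, x ^ r ∂ν = m r) := by
  -- Step 1: uniform bounds on moments
  have hK : ∀ s : ℕ, ∃ K : ℝ, 0 ≤ K ∧ ∀ n, ∫ x, x ^ s ∂(μ n) ≤ K := by
    intro s
    obtain ⟨c, hc⟩ := (hconv s).bddAbove_range
    exact ⟨max c 0, le_max_right _ _, fun n =>
      le_trans (hc (Set.mem_range_self n)) (le_max_left _ _)⟩
  choose K hK0 hKb using hK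
  -- Step 2: Chebyshev
  have hcheb : ∀ n : ℕ, ∀ S : ℝ, 0 < S →
      ((μ n) {x | S ^ 2 ≤ x ^ 2}).toReal ≤ K 2 / S ^ 2 := by
    intro n S hS
    haveI := hprob n
    have h := mul_meas_ge_le_integral_of_nonneg
      (ae_of_all (μ n) fun x : ℝ => sq_nonneg x) (hint n 2) (S ^ 2)
    have hS2 : (0:ℝ) < S ^ 2 := pow_pos hS 2
    rw [le_div_iff₀ hS2, mul_comm]
    calc S ^ 2 * ((μ n) {x | S ^ 2 ≤ x ^ 2}).toReal ≤ ∫ x, x ^ 2 ∂(μ n) := h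
      _ ≤ K 2 := hKb 2 n
  -- Step 3: CDF bounds
  have hFle : ∀ n : ℕ, ∀ q : ℚ, (q : ℝ) < 0 →
      ((μ n) (Iic (q : ℝ))).toReal ≤ K 2 / (q : ℝ) ^ 2 := by
    intro n q hq
    haveI := hprob n
    have hsub : Iic (q : ℝ) ⊆ {x | (-(q:ℝ)) ^ 2 ≤ x ^ 2} := by
      intro x hx
      simp only [mem_setOf_eq, neg_sq]
      have : x ≤ (q : ℝ) := hx
      nlinarith
    calc ((μ n) (Iic (q : ℝ))).toReal
        ≤ ((μ n) {x | (-(q:ℝ)) ^ 2 ≤ x ^ 2}).toReal :=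
          ENNReal.toReal_mono (measure_ne_top _ _) (measure_mono hsub)
      _ ≤ K 2 / (-(q:ℝ)) ^ 2 := hcheb n (-(q:ℝ)) (by linarith)
      _ = K 2 / (q : ℝ) ^ 2 := by rw [neg_sq]
  have hFge : ∀ n : ℕ, ∀ q : ℚ, 0 < (q : ℝ) →
      1 - K 2 / (q : ℝ) ^ 2 ≤ ((μ n) (Iic (q : ℝ))).toReal := by
    intro n q hq
    haveI := hprob n
    have hIic : ((μ n) (Iic (q:ℝ))).toReal = 1 - ((μ n) (Ioi (q:ℝ))).toReal := by
      rw [← compl_Ioi, measure_compl measurableSet_Ioi (measure_ne_top _ _), measure_univ,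
        ENNReal.toReal_sub_of_le prob_le_one one_ne_top, ENNReal.toReal_one]
    have hsub : Ioi (q : ℝ) ⊆ {x | ((q:ℝ)) ^ 2 ≤ x ^ 2} := by
      intro x hx
      have : (q : ℝ) < x := hx
      simp only [mem_setOf_eq]
      nlinarith
    have h2 : ((μ n) (Ioi (q:ℝ))).toReal ≤ K 2 / (q:ℝ) ^ 2 :=
      le_trans (ENNReal.toReal_mono (measure_ne_top _ _) (measure_mono hsub))
        (hcheb n _ hq)
    rw [hIic]
    linarith
  -- Step 4: subsequence via compactness
  have hle1 : ∀ n : ℕ, ∀ q : ℚ, ((μ n) (Iic (q : ℝ))).toReal ≤ 1 := by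
    intro n q
    haveI := hprob n
    simpa using ENNReal.toReal_mono one_ne_top (prob_le_one (μ := μ n) (s := Iic (q:ℝ)))
  set u : ℕ → (ℚ → Set.Icc (0:ℝ) 1) := fun n q =>
    ⟨((μ n) (Iic (q : ℝ))).toReal, ENNReal.toReal_nonneg, hle1 n q⟩ with hudef
  obtain ⟨g, -, φ, hφ, hgconv0⟩ :=
    IsCompact.tendsto_subseq (isCompact_univ) (fun n => Set.mem_univ (u n))
  have hgconv : ∀ q : ℚ, Tendsto (fun n => ((μ (φ n)) (Iic (q : ℝ))).toReal) atTop
      (𝓝 ((g q : ℝ))) := by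
    intro q
    have := tendsto_pi_nhds.mp hgconv0 q
    exact (continuous_subtype_val.tendsto _).comp this
  set gr : ℚ → ℝ := fun q => (g q : ℝ) with hgrdef
  have hgr0 : ∀ q, 0 ≤ gr q := fun q => (g q).2.1
  have hgr1 : ∀ q, gr q ≤ 1 := fun q => (g q).2.2
  have hgrmono : ∀ q q' : ℚ, q ≤ q' → gr q ≤ gr q' := by
    intro q q' h
    refine le_of_tendsto_of_tendsto' (hgconv q) (hgconv q') fun n => ?_
    exact ENNReal.toReal_mono (measure_ne_top _ _)
      (measure_mono (Iic_subset_Iic.mpr (by exact_mod_cast h)))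
  have hgrle : ∀ q : ℚ, (q : ℝ) < 0 → gr q ≤ K 2 / (q : ℝ) ^ 2 := fun q hq =>
    le_of_tendsto' (hgconv q) fun n => hFle (φ n) q hq
  have hgrge : ∀ q : ℚ, 0 < (q : ℝ) → 1 - K 2 / (q : ℝ) ^ 2 ≤ gr q := fun q hq =>
    ge_of_tendsto' (hgconv q) fun n => hFge (φ n) q hq
  -- Step 5: build G
  obtain ⟨G, hgle, hgge, hG0x, hG1x, happrox⟩ := build_G gr hgrmono hgr0 hgr1
  -- Step 6: limits of G
  have hNchoice : ∀ ε : ℝ, 0 < ε → ∃ N : ℕ, 1 ≤ (N : ℝ) ∧ K 2 / (N : ℝ) ^ 2 < ε := by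
    intro ε hε
    set c : ℝ := (⌈K 2 / ε⌉₊ : ℝ) with hc
    have hc0 : 0 ≤ c := Nat.cast_nonneg _
    have h1 : K 2 / ε ≤ c := Nat.le_ceil _
    refine ⟨⌈K 2 / ε⌉₊ + 1, ?_, ?_⟩
    · push_cast; linarith
    · have hKlt : K 2 < ε * (c + 1) := by
        have := (div_le_iff₀ hε).mp h1
        nlinarith
      have hsq : c + 1 ≤ (c + 1) ^ 2 := by nlinarith
      rw [div_lt_iff₀ (by positivity)]
      push_cast
      nlinarith
  have hGbot : Tendsto G atBot (𝓝 0) := by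
    rw [Metric.tendsto_nhds]
    intro ε hε
    obtain ⟨N, hN1, hN2⟩ := hNchoice ε hε
    rw [eventually_atBot]
    refine ⟨-(N : ℝ) - 1, fun x hx => ?_⟩
    have hq : x < ((-(N:ℤ) : ℚ) : ℝ) := by push_cast; linarith
    have h1 : G x ≤ gr (-(N:ℤ) : ℚ) := hgle x _ hq
    have h2 : gr (-(N:ℤ) : ℚ) ≤ K 2 / (N : ℝ) ^ 2 := by
      have := hgrle (-(N:ℤ) : ℚ) (by push_cast; linarith)
      rw [show (((-(N:ℤ) : ℚ)) : ℝ) = -(N:ℝ) by push_cast; ring] at this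
      simpa [neg_pow] using this
    rw [Real.dist_eq, sub_zero, abs_of_nonneg (hG0x x)]
    calc G x ≤ K 2 / (N : ℝ) ^ 2 := le_trans h1 h2
      _ < ε := hN2
  have hGtop : Tendsto G atTop (𝓝 1) := by
    rw [Metric.tendsto_nhds]
    intro ε hε
    obtain ⟨N, hN1, hN2⟩ := hNchoice ε hε
    rw [eventually_atTop]
    refine ⟨(N : ℝ), fun x hx => ?_⟩
    have h1 : gr (N : ℚ) ≤ G x := hgge x _ (by push_cast; linarith)
    have h2 : 1 - K 2 / (N : ℝ) ^ 2 ≤ gr (N : ℚ) := by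
      have := hgrge (N : ℚ) (by push_cast; linarith)
      simpa using this
    rw [Real.dist_eq, abs_of_nonpos (by linarith [hG1x x])]
    have := hG1x x
    linarith
  -- Step 7: CDF convergence at continuity points
  have hcdf : ∀ x : ℝ, ContinuousAt G x →
      Tendsto (fun n => ((μ (φ n)) (Iic x)).toReal) atTop (𝓝 (G x)) :=
    cdf_tendsto (fun n => μ (φ n)) (fun n => hprob (φ n)) gr G hgle happrox hgconv
  -- the measure
  set ν := G.measure with hνdef
  haveI hνprob : IsProbabilityMeasure ν := G.isProbabilityMeasure hGbot hGtop
  have hclamp : ∀ (S : ℝ), 0 < S → ∀ r : ℕ,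
      Tendsto (fun n => ∫ x, (max (-S) (min x S)) ^ r ∂(μ (φ n))) atTop
        (𝓝 (∫ x, (max (-S) (min x S)) ^ r ∂ν)) := fun S hS r =>
    clamp_tendsto (fun n => μ (φ n)) (fun n => hprob (φ n)) G hGbot hGtop hcdf S hS r
  -- pointwise facts about clamps and even powers
  have he : ∀ (s : ℕ) (y : ℝ), y ^ (2 * s) = |y| ^ (2 * s) := by
    intro s y
    have hy : (0:ℝ) ≤ y ^ (2 * s) := by
      rw [pow_mul]; exact pow_nonneg (sq_nonneg y) s
    rw [← abs_pow, abs_of_nonneg hy]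
  have habs_eq : ∀ (S : ℝ), 0 < S → ∀ x : ℝ, |max (-S) (min x S)| = min |x| S := by
    intro S hS x
    rcases le_total 0 x with hx | hx
    · have h1 : max (-S) (min x S) = min x S :=
        max_eq_right (le_min (by linarith) (by linarith))
      rw [h1, abs_of_nonneg (le_min hx hS.le), abs_of_nonneg hx]
    · have h1 : min x S = x := min_eq_left (by linarith)
      rw [h1, abs_of_nonpos (max_le (by linarith) hx), abs_of_nonpos hx, ← min_neg_neg,
        neg_neg, min_comm]
  have hcl_eq : ∀ (S : ℝ), 0 < S → ∀ (s : ℕ) (x : ℝ),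
      (max (-S) (min x S)) ^ (2 * s) = (min |x| S) ^ (2 * s) := by
    intro S hS s x
    rw [he s _, habs_eq S hS x]
  have hcl_le : ∀ (S : ℝ), 0 < S → ∀ (s : ℕ) (x : ℝ),
      (max (-S) (min x S)) ^ (2 * s) ≤ x ^ (2 * s) := by
    intro S hS s x
    rw [hcl_eq S hS s x, he s x]
    exact pow_le_pow_left₀ (le_min (abs_nonneg _) hS.le) (min_le_left _ _) _
  -- uniform bound on clamped even moments of ν
  have hbcl : ∀ (s : ℕ) (S : ℝ), 0 < S →
      ∫ x, (max (-S) (min x S)) ^ (2 * s) ∂ν ≤ K (2 * s) := by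
    intro s S hS
    refine le_of_tendsto' (hclamp S hS (2 * s)) fun n => ?_
    haveI := hprob (φ n)
    calc ∫ x, (max (-S) (min x S)) ^ (2 * s) ∂(μ (φ n))
        ≤ ∫ x, x ^ (2 * s) ∂(μ (φ n)) :=
          integral_mono (clamp_integrable _ _ S hS) (hint (φ n) (2 * s))
            (fun x => hcl_le S hS s x)
      _ ≤ K (2 * s) := hKb (2 * s) (φ n)
  -- lintegral bound
  have hboundν : ∀ s : ℕ,
      (∫⁻ x, ENNReal.ofReal (x ^ (2 * s)) ∂ν) ≤ ENNReal.ofReal (K (2 * s)) := by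
    intro s
    set fN : ℕ → ℝ → ℝ≥0∞ :=
      fun N x => ENNReal.ofReal ((min |x| ((N : ℝ) + 1)) ^ (2 * s)) with hfNdef
    have hfNmeas : ∀ N, Measurable (fN N) :=
      fun N => ((continuous_abs.min continuous_const).pow _).measurable.ennreal_ofReal
    have hfNmono : Monotone fN := by
      intro N M h x
      refine ENNReal.ofReal_le_ofReal
        (pow_le_pow_left₀ (le_min (abs_nonneg _) (by positivity)) ?_ _)
      exact min_le_min le_rfl (add_le_add_left (Nat.cast_le.mpr h) 1)
    have hsup : ∀ x, (⨆ N, fN N x) = ENNReal.ofReal (x ^ (2 * s)) := by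
      intro x
      apply le_antisymm
      · refine iSup_le fun N => ENNReal.ofReal_le_ofReal ?_
        rw [he s x]
        exact pow_le_pow_left₀ (le_min (abs_nonneg _) (by positivity)) (min_le_left _ _) _
      · have hx : |x| ≤ (⌈|x|⌉₊ : ℝ) + 1 := by
          have := Nat.le_ceil |x|
          linarith
        have : fN ⌈|x|⌉₊ x = ENNReal.ofReal (x ^ (2 * s)) := by
          rw [hfNdef]
          simp only [min_eq_left hx]
          rw [← he s x]
        rw [← this]
        exact le_iSup (fun N => fN N x) ⌈|x|⌉₊
    have hfN_int : ∀ N : ℕ, ∫⁻ x, fN N x ∂ν ≤ ENNReal.ofReal (K (2 * s)) := by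
      intro N
      have hS : (0:ℝ) < (N : ℝ) + 1 := by positivity
      have heq : ∫⁻ x, fN N x ∂ν
          = ∫⁻ x, ENNReal.ofReal ((max (-((N:ℝ)+1)) (min x ((N:ℝ)+1))) ^ (2 * s)) ∂ν := by
        refine lintegral_congr fun x => ?_
        rw [hcl_eq _ hS s x]
      have hfin : (∫⁻ x, fN N x ∂ν) ≠ ⊤ := by
        refine ne_of_lt (lt_of_le_of_lt (lintegral_mono fun x =>
          ENNReal.ofReal_le_ofReal (pow_le_pow_left₀
            (le_min (abs_nonneg _) hS.le) (min_le_right _ _) _)) ?_)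
        rw [lintegral_const, measure_univ, mul_one]
        exact ENNReal.ofReal_lt_top
      have hint_eq : ∫ x, (max (-((N:ℝ)+1)) (min x ((N:ℝ)+1))) ^ (2 * s) ∂ν
          = (∫⁻ x, fN N x ∂ν).toReal := by
        rw [heq]
        exact integral_eq_lintegral_of_nonneg_ae
          (ae_of_all _ fun x => by
            simp only [Pi.zero_apply]
            rw [pow_mul]
            exact pow_nonneg (sq_nonneg _) s)
          ((continuous_const.max (continuous_id.min continuous_const)).pow
            (2 * s)).aestronglyMeasurable
      have := hbcl s ((N:ℝ)+1) hS
      rw [hint_eq] at this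
      calc ∫⁻ x, fN N x ∂ν = ENNReal.ofReal ((∫⁻ x, fN N x ∂ν).toReal) :=
            (ENNReal.ofReal_toReal hfin).symm
        _ ≤ ENNReal.ofReal (K (2 * s)) := ENNReal.ofReal_le_ofReal this
    calc ∫⁻ x, ENNReal.ofReal (x ^ (2 * s)) ∂ν = ∫⁻ x, ⨆ N, fN N x ∂ν := by
          refine lintegral_congr fun x => (hsup x).symm
      _ = ⨆ N, ∫⁻ x, fN N x ∂ν := lintegral_iSup hfNmeas hfNmono
      _ ≤ ENNReal.ofReal (K (2 * s)) := iSup_le hfN_int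
  have hev_nonneg : ∀ (s : ℕ) (x : ℝ), (0:ℝ) ≤ x ^ (2 * s) := by
    intro s x
    rw [pow_mul]
    exact pow_nonneg (sq_nonneg x) s
  have hint2ν : ∀ s : ℕ, Integrable (fun x => x ^ (2 * s)) ν := by
    intro s
    refine ⟨(continuous_pow _).aestronglyMeasurable, ?_⟩
    rw [hasFiniteIntegral_iff_ofReal (ae_of_all _ fun x => hev_nonneg s x)]
    exact lt_of_le_of_lt (hboundν s) ENNReal.ofReal_lt_top
  have hmomb : ∀ s : ℕ, ∫ x, x ^ (2 * s) ∂ν ≤ K (2 * s) := by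
    intro s
    rw [integral_eq_lintegral_of_nonneg_ae (ae_of_all _ fun x => hev_nonneg s x)
      (continuous_pow _).aestronglyMeasurable]
    calc (∫⁻ x, ENNReal.ofReal (x ^ (2 * s)) ∂ν).toReal
        ≤ (ENNReal.ofReal (K (2 * s))).toReal :=
          ENNReal.toReal_mono ENNReal.ofReal_ne_top (hboundν s)
      _ = K (2 * s) := ENNReal.toReal_ofReal (hK0 (2 * s))
  have hintν : ∀ r : ℕ, Integrable (fun x => x ^ r) ν := by
    intro r
    refine Integrable.mono' ((integrable_const (1:ℝ)).add (hint2ν r))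
      (continuous_pow r).aestronglyMeasurable (ae_of_all _ fun x => ?_)
    rw [Real.norm_eq_abs, abs_pow]
    simp only [Pi.add_apply]
    rcases le_total |x| 1 with h | h
    · have := pow_le_one₀ (abs_nonneg x) h (n := r)
      have := hev_nonneg r x
      linarith
    · have h1 : |x| ^ r ≤ |x| ^ (2 * r) := pow_le_pow_right₀ h (by omega)
      rw [← he r x] at h1
      linarith
  refine ⟨ν, hνprob, hintν, ?_⟩
  intro r
  rcases Nat.eq_zero_or_pos r with hr0 | hrpos
  · subst hr0
    have h1 : ∀ n, ∫ x, x ^ 0 ∂(μ n) = 1 := fun n => by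
      haveI := hprob n
      simp
    have h2 : m 0 = 1 := by
      refine tendsto_nhds_unique (hconv 0) ?_
      simp only [h1]
      exact tendsto_const_nhds
    rw [h2]
    simp
  · -- r ≥ 1
    set A := ∫ x, x ^ r ∂ν with hA
    have hsubseq : Tendsto (fun n => ∫ x, x ^ r ∂(μ (φ n))) atTop (𝓝 (m r)) :=
      (hconv r).comp (hφ.tendsto_atTop)
    have hbound : ∀ N : ℕ, |A - m r| ≤ 4 * K (2 * r) / ((N : ℝ) + 1) ^ r := by
      intro N
      set S : ℝ := (N : ℝ) + 1 with hSdef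
      have hS1 : (1:ℝ) ≤ S := by
        have := Nat.cast_nonneg (α := ℝ) N
        simp only [hSdef]
        linarith
      have hS0 : (0:ℝ) < S := by positivity
      have hSr : (0:ℝ) < S ^ r := pow_pos hS0 r
      set c := ∫ x, (max (-S) (min x S)) ^ r ∂ν with hc
      have h1 : |A - c| ≤ 2 * K (2 * r) / S ^ r := by
        refine le_trans (integral_tail ν r S hS1 (hintν r) (hint2ν r)) ?_
        gcongr
        exact hmomb r
      have h2 : |m r - c| ≤ 2 * K (2 * r) / S ^ r := by
        have htd : Tendsto (fun n => |(∫ x, x ^ r ∂(μ (φ n)))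
            - ∫ x, (max (-S) (min x S)) ^ r ∂(μ (φ n))|) atTop (𝓝 (|m r - c|)) :=
          ((hsubseq.sub (hclamp S hS0 r)).abs)
        refine le_of_tendsto' htd fun n => ?_
        haveI := hprob (φ n)
        refine le_trans (integral_tail (μ (φ n)) r S hS1 (hint (φ n) r)
          (hint (φ n) (2 * r))) ?_
        gcongr
        exact hKb (2 * r) (φ n)
      calc |A - m r| ≤ |A - c| + |c - m r| := abs_sub_le A c (m r)
        _ = |A - c| + |m r - c| := by rw [abs_sub_comm c (m r)]
        _ ≤ 2 * K (2 * r) / S ^ r + 2 * K (2 * r) / S ^ r := add_le_add h1 h2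
        _ = 4 * K (2 * r) / S ^ r := by ring
    have hzero : Tendsto (fun N : ℕ => 4 * K (2 * r) / ((N : ℝ) + 1) ^ r) atTop (𝓝 0) := by
      refine Tendsto.div_atTop tendsto_const_nhds ?_
      refine (tendsto_pow_atTop (by omega)).comp ?_
      exact tendsto_atTop_add_const_right _ 1 tendsto_natCast_atTop_atTop
    have habs : |A - m r| ≤ 0 := ge_of_tendsto' hzero hbound |>.trans_eq rfl
    have : A - m r = 0 := abs_eq_zero.mp (le_antisymm habs (abs_nonneg _))
    linarith
end

section
/- Let (μ_n) be a sequence of probability measures on ℝ with all moments finite such that m_r = lim_n ∫ x^r dμ_n exists for every r, and suppose μ is the unique probability measure with moments (m_r). Then μ_n converges weakly to μ. -/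
open MeasureTheory Filter Set Topology BoundedContinuousFunction

/-- Chebyshev-type tail bound. -/
lemma mom_cheb (κ : Measure ℝ) [IsProbabilityMeasure κ]
    (hint : Integrable (fun x => x ^ 2) κ) {C : ℝ} (hC : ∫ x, x ^ 2 ∂κ ≤ C)
    {A : ℝ} (hA : 0 < A) : (κ {x : ℝ | A ≤ |x|}).toReal ≤ C / A ^ 2 := by
  have h1 : {x : ℝ | A ≤ |x|} ⊆ {x : ℝ | A ^ 2 ≤ x ^ 2} := by
    intro x hx
    simp only [mem_setOf_eq] at hx ⊢
    calc A ^ 2 ≤ |x| ^ 2 := by gcongr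
    _ = x ^ 2 := sq_abs x
  have h2 := mul_meas_ge_le_integral_of_nonneg
    (ae_of_all κ (fun x : ℝ => sq_nonneg x)) hint (A ^ 2)
  have h3 : (κ {x : ℝ | A ≤ |x|}).toReal ≤ (κ {x : ℝ | A ^ 2 ≤ x ^ 2}).toReal := by
    exact ENNReal.toReal_mono (measure_ne_top _ _) (measure_mono h1)
  have hA2 : (0:ℝ) < A ^ 2 := by positivity
  rw [le_div_iff₀ hA2]
  calc (κ {x : ℝ | A ≤ |x|}).toReal * A ^ 2
      ≤ (κ {x : ℝ | A ^ 2 ≤ x ^ 2}).toReal * A ^ 2 := by gcongr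
    _ = A ^ 2 * (κ {x | A ^ 2 ≤ x ^ 2}).toReal := mul_comm _ _
    _ ≤ ∫ x, x ^ 2 ∂κ := h2
    _ ≤ C := hC

/-- finite unions of `Ioc` intervals with endpoints in a nice set `D` satisfy the liminf bound. -/
lemma mom_merge (κs : ℕ → Measure ℝ) (ρ : Measure ℝ) (D : Set ℝ)
    (hIoc : ∀ a ∈ D, ∀ b ∈ D,
      Tendsto (fun n => κs n (Ioc a b)) atTop (𝓝 (ρ (Ioc a b)))) :
    ∀ (s : Finset (ℝ × ℝ)), (∀ p ∈ s, p.1 ∈ D ∧ p.2 ∈ D) →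
      ρ (⋃ p ∈ s, Ioc p.1 p.2) ≤ atTop.liminf (fun n => κs n (⋃ p ∈ s, Ioc p.1 p.2)) := by
  suffices h : ∀ (N : ℕ) (s : Finset (ℝ × ℝ)), s.card = N → (∀ p ∈ s, p.1 ∈ D ∧ p.2 ∈ D) →
      ρ (⋃ p ∈ s, Ioc p.1 p.2) ≤ atTop.liminf (fun n => κs n (⋃ p ∈ s, Ioc p.1 p.2)) by
    exact fun s hs => h s.card s rfl hs
  intro N
  induction N using Nat.strong_induction_on with
  | _ N ih =>
    intro s hcard hs
    by_cases hd : (↑s : Set (ℝ × ℝ)).PairwiseDisjoint (fun p => Ioc p.1 p.2)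
    · have hsum : ∀ ξ : Measure ℝ, ξ (⋃ p ∈ s, Ioc p.1 p.2) = ∑ p ∈ s, ξ (Ioc p.1 p.2) :=
        fun ξ => measure_biUnion_finset hd (fun p _ => measurableSet_Ioc)
      have ht : Tendsto (fun n => κs n (⋃ p ∈ s, Ioc p.1 p.2)) atTop
          (𝓝 (ρ (⋃ p ∈ s, Ioc p.1 p.2))) := by
        simp_rw [hsum]
        exact tendsto_finset_sum _ (fun p hp => hIoc p.1 (hs p hp).1 p.2 (hs p hp).2)
      exact le_of_eq ht.liminf_eq.symm
    · simp only [Set.PairwiseDisjoint, Set.Pairwise, not_forall] at hd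
      obtain ⟨p, hp, q, hq, hpq, hnd⟩ := hd
      rw [Finset.mem_coe] at hp hq
      obtain ⟨z, hzp, hzq⟩ := Set.not_disjoint_iff.mp hnd
      simp only [Function.onFun, mem_Ioc] at hzp hzq
      have hmerge : Ioc p.1 p.2 ∪ Ioc q.1 q.2 = Ioc (min p.1 q.1) (max p.2 q.2) := by
        apply Set.Ioc_union_Ioc
        · exact le_trans (min_le_left _ _) (le_trans hzp.1.le (le_trans hzq.2 (le_max_right _ _)))
        · exact le_trans (min_le_left _ _) (le_trans hzq.1.le (le_trans hzp.2 (le_max_right _ _)))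
      set r : ℝ × ℝ := (min p.1 q.1, max p.2 q.2) with hr
      set t : Finset (ℝ × ℝ) := (s.erase p).erase q with htdef
      set s' : Finset (ℝ × ℝ) := insert r t with hs'def
      have hqp : q ∈ s.erase p := Finset.mem_erase.mpr ⟨Ne.symm hpq, hq⟩
      have hcard2 : 2 ≤ N := by
        rw [← hcard]
        exact Finset.one_lt_card.mpr ⟨p, hp, q, hq, hpq⟩
      have hcardt : t.card = N - 2 := by
        rw [htdef, Finset.card_erase_of_mem hqp, Finset.card_erase_of_mem hp, hcard]; omega
      have hcards' : s'.card < N := by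
        calc s'.card ≤ t.card + 1 := Finset.card_insert_le _ _
          _ = N - 2 + 1 := by rw [hcardt]
          _ < N := by omega
      have hUeq : (⋃ p' ∈ s', Ioc p'.1 p'.2) = ⋃ p' ∈ s, Ioc p'.1 p'.2 := by
        ext x
        simp only [mem_iUnion, exists_prop]
        have hmx := Set.ext_iff.mp hmerge x
        simp only [mem_union] at hmx
        constructor
        · rintro ⟨p', hp', hx⟩
          rw [hs'def, Finset.mem_insert] at hp'
          rcases hp' with rfl | hp'
          · rcases hmx.mpr hx with h | h
            · exact ⟨p, hp, h⟩
            · exact ⟨q, hq, h⟩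
          · exact ⟨p', Finset.mem_of_mem_erase (Finset.mem_of_mem_erase hp'), hx⟩
        · rintro ⟨p', hp', hx⟩
          by_cases h1 : p' = p
          · exact ⟨r, Finset.mem_insert_self _ _, hmx.mp (Or.inl (h1 ▸ hx))⟩
          by_cases h2 : p' = q
          · exact ⟨r, Finset.mem_insert_self _ _, hmx.mp (Or.inr (h2 ▸ hx))⟩
          · exact ⟨p', Finset.mem_insert_of_mem
              (Finset.mem_erase.mpr ⟨h2, Finset.mem_erase.mpr ⟨h1, hp'⟩⟩), hx⟩
      have hs' : ∀ p' ∈ s', p'.1 ∈ D ∧ p'.2 ∈ D := by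
        intro p' hp'
        rw [hs'def, Finset.mem_insert] at hp'
        rcases hp' with rfl | hp'
        · constructor
          · rcases min_cases p.1 q.1 with ⟨h, _⟩ | ⟨h, _⟩ <;>
              · rw [hr]; simp only [h]
                first
                  | exact (hs p hp).1
                  | exact (hs q hq).1
          · rcases max_cases p.2 q.2 with ⟨h, _⟩ | ⟨h, _⟩ <;>
              · rw [hr]; simp only [h]
                first
                  | exact (hs p hp).2
                  | exact (hs q hq).2
        · exact hs p' (Finset.mem_of_mem_erase (Finset.mem_of_mem_erase hp'))
      rw [← hUeq]
      exact ih s'.card hcards' s' rfl hs'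

/-- Helly selection + tightness: a tight sequence of probability measures has a
weakly convergent subsequence. -/
lemma mom_helly (κ : ℕ → Measure ℝ) (hp : ∀ n, IsProbabilityMeasure (κ n))
    (hi2 : ∀ n, Integrable (fun x => x ^ 2) (κ n)) {C : ℝ}
    (hC : ∀ n, ∫ x, x ^ 2 ∂(κ n) ≤ C) :
    ∃ ms : ℕ → ℕ, StrictMono ms ∧ ∃ ρ : Measure ℝ, IsProbabilityMeasure ρ ∧
      ∀ f : ℝ →ᵇ ℝ, Tendsto (fun n => ∫ x, f x ∂(κ (ms n))) atTop (𝓝 (∫ x, f x ∂ρ)) := by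
  have hC0 : 0 ≤ C := le_trans (integral_nonneg (fun x => sq_nonneg x)) (hC 0)
  -- the CDFs
  set F : ℕ → ℝ → ℝ := fun n x => (κ n (Iic x)).toReal with hF
  have hF01 : ∀ n x, F n x ∈ Icc (0:ℝ) 1 := by
    intro n x
    constructor
    · exact ENNReal.toReal_nonneg
    · have := measure_mono (μ := κ n) (subset_univ (Iic x))
      have h2 : κ n univ = 1 := (hp n).measure_univ
      simpa [h2] using ENNReal.toReal_mono (by simp [h2]) this
  have hFmono : ∀ n, Monotone (F n) := by
    intro n x y hxy
    exact ENNReal.toReal_mono (measure_ne_top _ _) (measure_mono (Iic_subset_Iic.mpr hxy))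
  -- tail bounds
  have htail : ∀ n, ∀ A : ℝ, 0 < A →
      (∀ x ≤ -A, F n x ≤ C / A ^ 2) ∧ (∀ x, A ≤ x → 1 - C / A ^ 2 ≤ F n x) := by
    intro n A hA
    have := hp n
    have hcheb := mom_cheb (κ n) (hi2 n) (hC n) hA
    constructor
    · intro x hx
      refine le_trans ?_ hcheb
      refine ENNReal.toReal_mono (measure_ne_top _ _) (measure_mono ?_)
      intro y hy
      simp only [mem_Iic] at hy
      simp only [mem_setOf_eq]
      have : y ≤ -A := le_trans hy hx
      rw [abs_of_nonpos (le_trans this (by linarith))]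
      linarith
    · intro x hx
      have hsub : Ioi x ⊆ {y : ℝ | A ≤ |y|} := by
        intro y hy
        simp only [mem_Ioi] at hy
        have h1 : A < y := lt_of_le_of_lt hx hy
        simp only [mem_setOf_eq]
        rw [abs_of_nonneg (by linarith)]
        exact h1.le
      have h2 : (κ n (Ioi x)).toReal ≤ C / A ^ 2 :=
        le_trans (ENNReal.toReal_mono (measure_ne_top _ _) (measure_mono hsub)) hcheb
      have h3 : F n x = 1 - (κ n (Ioi x)).toReal := by
        have hu : κ n (Iic x) + κ n (Ioi x) = 1 := by
          rw [← measure_union (Iic_disjoint_Ioi le_rfl) measurableSet_Ioi]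
          simp [(hp n).measure_univ]
        have := congrArg ENNReal.toReal hu
        rw [ENNReal.toReal_add (measure_ne_top _ _) (measure_ne_top _ _)] at this
        simp only [ENNReal.toReal_one] at this
        simp only [hF]
        linarith
      rw [h3]
      linarith
  -- Helly extraction on rationals
  obtain ⟨G, hG, ms, hms, hconvG⟩ :
      ∃ G ∈ Set.pi univ (fun _ : ℚ => Icc (0:ℝ) 1), ∃ ms : ℕ → ℕ, StrictMono ms ∧
        ∀ q : ℚ, Tendsto (fun n => F (ms n) q) atTop (𝓝 (G q)) := by
    obtain ⟨G, hG, ms, hms, hconv⟩ :=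
      (isCompact_univ_pi (fun _ : ℚ => isCompact_Icc)).tendsto_subseq
        (x := fun n => fun q : ℚ => F n (q:ℝ))
        (fun n => by intro q _; exact hF01 n q)
    exact ⟨G, hG, ms, hms, fun q => (tendsto_pi_nhds.mp hconv) q⟩
  have hG01 : ∀ q : ℚ, G q ∈ Icc (0:ℝ) 1 := fun q => hG q (mem_univ q)
  have hGmono : ∀ q q' : ℚ, q ≤ q' → G q ≤ G q' := by
    intro q q' hqq
    refine le_of_tendsto_of_tendsto (hconvG q) (hconvG q') (Eventually.of_forall fun n => ?_)
    exact hFmono (ms n) (by exact_mod_cast hqq)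
  -- the limit candidate
  set M : ℝ → ℝ := fun x => sInf (G '' {q : ℚ | x < (q:ℝ)}) with hM
  have hne : ∀ x : ℝ, (G '' {q : ℚ | x < (q:ℝ)}).Nonempty := by
    intro x
    obtain ⟨q, hq⟩ := exists_rat_gt x
    exact ⟨G q, ⟨q, hq, rfl⟩⟩
  have hbdd : ∀ x : ℝ, BddBelow (G '' {q : ℚ | x < (q:ℝ)}) := by
    intro x
    exact ⟨0, fun y ⟨q, _, hq⟩ => hq ▸ (hG01 q).1⟩
  have hMmono : Monotone M := by
    intro x y hxy
    exact csInf_le_csInf (hbdd x) (hne y)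
      (image_mono (fun q hq => lt_of_le_of_lt hxy hq))
  set H : StieltjesFunction ℝ := hMmono.stieltjesFunction with hH
  have hHM : ∀ x, H x = Function.rightLim M x := fun x => rfl
  -- key inequalities
  have key1 : ∀ (x : ℝ) (q : ℚ), x < q → H x ≤ G q := by
    intro x q hxq
    obtain ⟨z, hxz, hzq⟩ := exists_between hxq
    calc H x ≤ M z := hMmono.rightLim_le hxz
      _ ≤ G q := csInf_le (hbdd z) ⟨q, hzq, rfl⟩
  have key2 : ∀ (x : ℝ) (q : ℚ), (q:ℝ) < x → G q ≤ H x := by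
    intro x q hqx
    have h1 : G q ≤ M x := by
      refine le_csInf (hne x) ?_
      rintro y ⟨q', hq', rfl⟩
      exact hGmono q q' (by exact_mod_cast le_of_lt (lt_trans hqx hq'))
    exact le_trans h1 (hMmono.le_rightLim le_rfl)
  have hH0 : ∀ x, 0 ≤ H x := by
    intro x
    refine le_trans ?_ (hMmono.le_rightLim le_rfl)
    exact le_csInf (hne x) (by rintro y ⟨q', _, rfl⟩; exact (hG01 q').1)
  have hH1 : ∀ x, H x ≤ 1 := by
    intro x
    obtain ⟨q, hq⟩ := exists_rat_gt x
    exact le_trans (key1 x q hq) (hG01 q).2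
  -- tails of G
  have hGtail : ∀ A : ℝ, 0 < A →
      (∀ q : ℚ, (q:ℝ) ≤ -A → G q ≤ C / A ^ 2) ∧
      (∀ q : ℚ, A ≤ (q:ℝ) → 1 - C / A ^ 2 ≤ G q) := by
    intro A hA
    constructor
    · intro q hq
      refine le_of_tendsto (hconvG q) (Eventually.of_forall fun n => ?_)
      exact (htail (ms n) A hA).1 q hq
    · intro q hq
      refine ge_of_tendsto (hconvG q) (Eventually.of_forall fun n => ?_)
      exact (htail (ms n) A hA).2 q hq
  -- H tends to 0 at -∞ and 1 at +∞
  have hbot : Tendsto H atBot (𝓝 0) := by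
    rw [tendsto_order]
    constructor
    · intro a ha
      exact Eventually.of_forall fun x => lt_of_lt_of_le ha (hH0 x)
    · intro a ha
      obtain ⟨A, hApos, hAsmall⟩ : ∃ A : ℝ, 0 < A ∧ C / A ^ 2 < a := by
        refine ⟨Real.sqrt (C / a) + 1, by positivity, ?_⟩
        rw [div_lt_iff₀ (by positivity)]
        have h1 : C / a < (Real.sqrt (C / a) + 1) ^ 2 := by
          nlinarith [Real.sq_sqrt (div_nonneg hC0 ha.le), Real.sqrt_nonneg (C / a),
            Real.sqrt_nonneg (C/a)]
        calc C = (C / a) * a := by field_simp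
          _ < (Real.sqrt (C / a) + 1) ^ 2 * a := by gcongr
          _ = a * (Real.sqrt (C / a) + 1) ^ 2 := mul_comm _ _
      filter_upwards [eventually_le_atBot (-(A + 1))] with x hx
      obtain ⟨q, hxq, hqA⟩ := exists_rat_btwn (show x < -A by linarith)
      calc H x ≤ G q := key1 x q hxq
        _ ≤ C / A ^ 2 := (hGtail A hApos).1 q hqA.le
        _ < a := hAsmall
  have htop : Tendsto H atTop (𝓝 1) := by
    rw [tendsto_order]
    constructor
    · intro a ha
      obtain ⟨A, hApos, hAsmall⟩ : ∃ A : ℝ, 0 < A ∧ C / A ^ 2 < 1 - a := by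
        have h1a : 0 < 1 - a := by linarith
        refine ⟨Real.sqrt (C / (1 - a)) + 1, by positivity, ?_⟩
        rw [div_lt_iff₀ (by positivity)]
        have h1 : C / (1 - a) < (Real.sqrt (C / (1 - a)) + 1) ^ 2 := by
          nlinarith [Real.sq_sqrt (div_nonneg hC0 h1a.le), Real.sqrt_nonneg (C / (1 - a))]
        calc C = (C / (1 - a)) * (1 - a) := by field_simp
          _ < (Real.sqrt (C / (1 - a)) + 1) ^ 2 * (1 - a) := by gcongr
          _ = (1 - a) * (Real.sqrt (C / (1 - a)) + 1) ^ 2 := mul_comm _ _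
      filter_upwards [eventually_ge_atTop (A + 1)] with x hx
      obtain ⟨q, hAq, hqx⟩ := exists_rat_btwn (show A < x by linarith)
      calc a = 1 - (1 - a) := by ring
        _ < 1 - C / A ^ 2 := by linarith
        _ ≤ G q := (hGtail A hApos).2 q hAq.le
        _ ≤ H x := key2 x q hqx
    · intro a ha
      exact Eventually.of_forall fun x => lt_of_le_of_lt (hH1 x) ha
    -- the limit measure
  set ρ : Measure ℝ := H.measure with hρ
  have hρprob : IsProbabilityMeasure ρ := by
    constructor
    rw [hρ, H.measure_univ hbot htop]
    norm_num
  -- continuity points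
  set D : Set ℝ := {x | ContinuousAt H x} with hD
  have hDdense : Dense D := by
    have h1 : Set.Countable {x | ¬ ContinuousAt H x} := H.mono.countable_not_continuousAt
    have h2 := h1.dense_compl ℝ
    simpa only [hD, compl_setOf, not_not] using h2
  have hcdf : ∀ x ∈ D, Tendsto (fun n => F (ms n) x) atTop (𝓝 (H x)) := by
    intro x hx
    rw [Metric.tendsto_atTop]
    intro ε hε
    obtain ⟨δ, hδ, hcont⟩ := Metric.continuousAt_iff.mp hx (ε / 4) (by linarith)
    have hyp : dist (x + δ / 2) x < δ := by
      rw [Real.dist_eq]; rw [abs_of_nonneg (by linarith)]; linarith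
    have hym : dist (x - δ / 2) x < δ := by
      rw [Real.dist_eq]; rw [abs_of_nonpos (by linarith)]; linarith
    have hHyp : H (x + δ / 2) < H x + ε / 4 := by
      have := hcont hyp; rw [Real.dist_eq, abs_sub_lt_iff] at this; linarith [this.1]
    have hHym : H x - ε / 4 < H (x - δ / 2) := by
      have := hcont hym; rw [Real.dist_eq, abs_sub_lt_iff] at this; linarith [this.2]
    obtain ⟨qp, hqp1, hqp2⟩ := exists_rat_btwn (show x < x + δ / 2 by linarith)
    obtain ⟨qm, hqm1, hqm2⟩ := exists_rat_btwn (show x - δ / 2 < x by linarith)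
    have hGqp : G qp ≤ H x + ε / 4 := le_trans (key2 _ qp hqp2) hHyp.le
    have hGqp' : H x ≤ G qp := key1 x qp hqp1
    have hGqm : H x - ε / 4 ≤ G qm := le_trans hHym.le (key1 _ qm hqm1)
    have hGqm' : G qm ≤ H x := key2 x qm hqm2
    obtain ⟨N1, hN1⟩ := Metric.tendsto_atTop.mp (hconvG qp) (ε / 4) (by linarith)
    obtain ⟨N2, hN2⟩ := Metric.tendsto_atTop.mp (hconvG qm) (ε / 4) (by linarith)
    refine ⟨max N1 N2, fun n hn => ?_⟩
    have h1 := hN1 n (le_trans (le_max_left _ _) hn)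
    have h2 := hN2 n (le_trans (le_max_right _ _) hn)
    rw [Real.dist_eq, abs_sub_lt_iff] at h1 h2
    have hub : F (ms n) x ≤ F (ms n) qp := hFmono (ms n) hqp1.le
    have hlb : F (ms n) qm ≤ F (ms n) x := hFmono (ms n) hqm2.le
    rw [Real.dist_eq, abs_sub_lt_iff]
    constructor
    · calc F (ms n) x - H x ≤ F (ms n) qp - H x := by linarith
        _ < G qp + ε / 4 - H x := by linarith [h1.1]
        _ ≤ ε / 2 := by linarith
        _ < ε := by linarith
    · calc H x - F (ms n) x ≤ H x - F (ms n) qm := by linarith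
        _ < H x - (G qm - ε / 4) := by linarith [h2.2]
        _ ≤ ε / 2 := by linarith
        _ < ε := by linarith
  have hIoc : ∀ a ∈ D, ∀ b ∈ D,
      Tendsto (fun n => κ (ms n) (Ioc a b)) atTop (𝓝 (ρ (Ioc a b))) := by
    intro a ha b hb
    rcases le_or_gt b a with hba | hab
    · simp only [Ioc_eq_empty (not_lt.mpr hba), measure_empty]
      exact tendsto_const_nhds
    · have hFIoc : ∀ n, κ n (Ioc a b) = ENNReal.ofReal (F n b - F n a) := by
        intro n
        have := hp n
        have hu : κ n (Iic a) + κ n (Ioc a b) = κ n (Iic b) := by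
          rw [← measure_union (Iic_disjoint_Ioc le_rfl) measurableSet_Ioc,
            Iic_union_Ioc_eq_Iic hab.le]
        have h2 : (κ n (Ioc a b)).toReal = F n b - F n a := by
          have h3 := congrArg ENNReal.toReal hu
          rw [ENNReal.toReal_add (measure_ne_top _ _) (measure_ne_top _ _)] at h3
          simp only [hF]
          linarith
        rw [← h2, ENNReal.ofReal_toReal (measure_ne_top _ _)]
      have hρIoc : ρ (Ioc a b) = ENNReal.ofReal (H b - H a) := H.measure_Ioc a b
      simp_rw [hFIoc, hρIoc]
      exact (ENNReal.continuous_ofReal.tendsto _).comp ((hcdf b hb).sub (hcdf a ha))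
  have hopen : ∀ U : Set ℝ, IsOpen U → ρ U ≤ atTop.liminf (fun n => κ (ms n) U) := by
    intro U hU
    haveI : IsProbabilityMeasure ρ := hρprob
    apply le_of_forall_lt
    intro c hc
    obtain ⟨K, hKU, hKc, hcK⟩ := (Measure.Regular.innerRegular (μ := ρ)) hU c hc
    refine lt_of_lt_of_le hcK ?_
    have hcover : ∀ x ∈ K, ∃ p : ℝ × ℝ, p.1 ∈ D ∧ p.2 ∈ D ∧ x ∈ Ioo p.1 p.2 ∧
        Ioc p.1 p.2 ⊆ U := by
      intro x hx
      obtain ⟨ε, hε, hball⟩ := Metric.isOpen_iff.mp hU x (hKU hx)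
      rw [Real.ball_eq_Ioo] at hball
      obtain ⟨A, hA1, hA2⟩ := hDdense.exists_between (show x - ε < x by linarith)
      obtain ⟨B, hB1, hB2⟩ := hDdense.exists_between (show x < x + ε by linarith)
      refine ⟨(A, B), hA1, hB1, ⟨hA2.2, hB2.1⟩, ?_⟩
      intro y hy
      exact hball ⟨lt_trans hA2.1 hy.1, lt_of_le_of_lt hy.2 hB2.2⟩
    choose! P hP1 hP2 hP3 hP4 using hcover
    obtain ⟨b, hbK, hbfin, hbcov⟩ := hKc.elim_finite_subcover_image
      (fun x _ => isOpen_Ioo) (fun x hx => mem_biUnion hx (hP3 x hx))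
    set s : Finset (ℝ × ℝ) := hbfin.toFinset.image P with hsdef
    have hsD : ∀ p ∈ s, p.1 ∈ D ∧ p.2 ∈ D := by
      intro p hps
      rw [hsdef, Finset.mem_image] at hps
      obtain ⟨x, hx, rfl⟩ := hps
      rw [Set.Finite.mem_toFinset] at hx
      exact ⟨hP1 x (hbK hx), hP2 x (hbK hx)⟩
    have hKS : K ⊆ ⋃ p ∈ s, Ioc p.1 p.2 := by
      intro y hy
      obtain ⟨x, hx, hy'⟩ := mem_iUnion₂.mp (hbcov hy)
      refine mem_iUnion₂.mpr ⟨P x, ?_, Ioo_subset_Ioc_self hy'⟩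
      rw [hsdef]
      exact Finset.mem_image_of_mem P (hbfin.mem_toFinset.mpr hx)
    have hSU : (⋃ p ∈ s, Ioc p.1 p.2) ⊆ U := by
      intro y hy
      obtain ⟨p, hps, hy'⟩ := mem_iUnion₂.mp hy
      rw [hsdef, Finset.mem_image] at hps
      obtain ⟨x, hx, rfl⟩ := hps
      exact hP4 x (hbK (hbfin.mem_toFinset.mp hx)) hy'
    calc ρ K ≤ ρ (⋃ p ∈ s, Ioc p.1 p.2) := measure_mono hKS
      _ ≤ atTop.liminf (fun n => κ (ms n) (⋃ p ∈ s, Ioc p.1 p.2)) :=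
          mom_merge _ ρ D hIoc s hsD
      _ ≤ atTop.liminf (fun n => κ (ms n) U) :=
          liminf_le_liminf (Eventually.of_forall fun n => measure_mono hSU)
  refine ⟨ms, hms, ρ, hρprob, ?_⟩
  haveI : ∀ n, IsProbabilityMeasure (κ (ms n)) := fun n => hp _
  haveI : IsProbabilityMeasure ρ := hρprob
  intro f
  apply BoundedContinuousFunction.tendsto_integral_of_forall_integral_le_liminf_integral
    (μs := fun n => κ (ms n))
  intro g hg
  exact MeasureTheory.integral_le_liminf_integral_of_forall_isOpen_measure_le_liminf_measure
    hg hopen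


/-- `x ↦ min (|x|^p) N` as a bounded continuous function. -/
noncomputable def bcfMinPow (p : ℕ) (N : ℕ) : ℝ →ᵇ ℝ :=
  BoundedContinuousFunction.ofNormedAddCommGroup (fun x => min (|x| ^ p) (N : ℝ))
    ((continuous_abs.pow p).min continuous_const) (N : ℝ)
    (fun x => by
      rw [Real.norm_eq_abs, abs_of_nonneg (le_min (by positivity) (Nat.cast_nonneg N))]
      exact min_le_right _ _)

lemma bcfMinPow_apply (p N : ℕ) (x : ℝ) : bcfMinPow p N x = min (|x| ^ p) (N : ℝ) := rfl

/-- `x ↦ (clamp x)^r` as a bounded continuous function. -/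
noncomputable def bcfClampPow (r : ℕ) (R : ℝ) : ℝ →ᵇ ℝ :=
  BoundedContinuousFunction.ofNormedAddCommGroup (fun x => (max (min x R) (-R)) ^ r)
    (((continuous_id.min continuous_const).max continuous_const).pow r) (|R| ^ r)
    (fun x => by
      rw [Real.norm_eq_abs, abs_pow]
      refine pow_le_pow_left₀ (abs_nonneg _) ?_ r
      rw [abs_le]
      constructor
      · exact le_max_of_le_right (neg_le_neg (le_abs_self R))
      · exact max_le ((min_le_right _ _).trans (le_abs_self R)) (neg_le_abs R))

lemma bcfClampPow_apply (r : ℕ) (R : ℝ) (x : ℝ) :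
    bcfClampPow r R x = (max (min x R) (-R)) ^ r := rfl

/-- Uniform moment bounds pass to a weak limit. -/
lemma mom_int_le (κ : ℕ → Measure ℝ) (hp : ∀ n, IsProbabilityMeasure (κ n))
    (habs : ∀ n p, Integrable (fun x => |x| ^ p) (κ n))
    (ρ : Measure ℝ) (hρ : IsProbabilityMeasure ρ)
    (hw : ∀ f : ℝ →ᵇ ℝ, Tendsto (fun n => ∫ x, f x ∂(κ n)) atTop (𝓝 (∫ x, f x ∂ρ)))
    (p : ℕ) {C : ℝ} (hC0 : 0 ≤ C) (hC : ∀ n, ∫ x, |x| ^ p ∂(κ n) ≤ C) :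
    Integrable (fun x => |x| ^ p) ρ ∧ ∫ x, |x| ^ p ∂ρ ≤ C := by
  haveI := hρ
  have hmeas : Measurable (fun x : ℝ => |x| ^ p) := (continuous_abs.pow p).measurable
  have hgle : ∀ N : ℕ, ∫ x, bcfMinPow p N x ∂ρ ≤ C := by
    intro N
    refine le_of_tendsto (hw (bcfMinPow p N)) (Eventually.of_forall fun n => ?_)
    haveI := hp n
    calc ∫ x, bcfMinPow p N x ∂(κ n) ≤ ∫ x, |x| ^ p ∂(κ n) := by
          refine integral_mono ((bcfMinPow p N).integrable _) (habs n p) fun x => ?_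
          exact min_le_left _ _
      _ ≤ C := hC n
  have hsup : ∀ x : ℝ, (⨆ N : ℕ, ENNReal.ofReal (min (|x| ^ p) (N : ℝ)))
      = ENNReal.ofReal (|x| ^ p) := by
    intro x
    apply le_antisymm
    · exact iSup_le fun N => ENNReal.ofReal_le_ofReal (min_le_left _ _)
    · obtain ⟨N, hN⟩ := exists_nat_ge (|x| ^ p)
      refine le_iSup_of_le N (le_of_eq ?_)
      rw [min_eq_left hN]
  have hmono : Monotone (fun N : ℕ => fun x : ℝ => ENNReal.ofReal (min (|x| ^ p) (N : ℝ))) := by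
    intro N M hNM
    intro x
    exact ENNReal.ofReal_le_ofReal (le_min (min_le_left _ _)
      ((min_le_right _ _).trans (by exact_mod_cast hNM)))
  have hlin : ∫⁻ x, ENNReal.ofReal (|x| ^ p) ∂ρ ≤ ENNReal.ofReal C := by
    have h1 : ∫⁻ x, ENNReal.ofReal (|x| ^ p) ∂ρ
        = ⨆ N : ℕ, ∫⁻ x, ENNReal.ofReal (min (|x| ^ p) (N : ℝ)) ∂ρ := by
      rw [← lintegral_iSup (fun N => (hmeas.min measurable_const).ennreal_ofReal) hmono]
      congr 1
      ext x
      exact (hsup x).symm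
    rw [h1]
    refine iSup_le fun N => ?_
    have h2 : ∫⁻ x, ENNReal.ofReal (min (|x| ^ p) (N : ℝ)) ∂ρ
        = ENNReal.ofReal (∫ x, bcfMinPow p N x ∂ρ) := by
      exact (ofReal_integral_eq_lintegral_ofReal ((bcfMinPow p N).integrable _)
        (Eventually.of_forall fun x => le_min (by positivity) (Nat.cast_nonneg N))).symm
    rw [h2]
    exact ENNReal.ofReal_le_ofReal (hgle N)
  have hint : Integrable (fun x => |x| ^ p) ρ := by
    refine ⟨hmeas.aestronglyMeasurable, ?_⟩
    rw [hasFiniteIntegral_iff_norm]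
    refine lt_of_le_of_lt (le_of_eq ?_) (lt_of_le_of_lt hlin ENNReal.ofReal_lt_top)
    congr 1
    ext x
    rw [Real.norm_eq_abs, abs_of_nonneg (by positivity : (0:ℝ) ≤ |x| ^ p)]
  refine ⟨hint, ?_⟩
  rw [integral_eq_lintegral_of_nonneg_ae (Eventually.of_forall fun x => by positivity)
    hmeas.aestronglyMeasurable]
  calc (∫⁻ x, ENNReal.ofReal (|x| ^ p) ∂ρ).toReal ≤ (ENNReal.ofReal C).toReal :=
        ENNReal.toReal_mono ENNReal.ofReal_ne_top hlin
    _ = C := ENNReal.toReal_ofReal hC0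

/-- Truncation error bound. -/
lemma mom_trunc_err (ξ : Measure ℝ) [IsProbabilityMeasure ξ] (r : ℕ) {R : ℝ} (hR : 0 < R)
    (hi : Integrable (fun x => x ^ r) ξ) (hi2 : Integrable (fun x => |x| ^ (r + 2)) ξ)
    {C : ℝ} (hC : ∫ x, |x| ^ (r + 2) ∂ξ ≤ C) :
    |(∫ x, x ^ r ∂ξ) - ∫ x, bcfClampPow r R x ∂ξ| ≤ 2 / R ^ 2 * C := by
  have hC0 : 0 ≤ C := le_trans (integral_nonneg fun x => by positivity) hC
  have hpt : ∀ x : ℝ, |x ^ r - bcfClampPow r R x| ≤ 2 / R ^ 2 * |x| ^ (r + 2) := by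
    intro x
    rw [bcfClampPow_apply]
    by_cases hx : |x| ≤ R
    · obtain ⟨hRx, hxR⟩ := abs_le.mp hx
      rw [min_eq_left hxR, max_eq_left hRx, sub_self, abs_zero]
      positivity
    · push_neg at hx
      have h1 : |x ^ r - (max (min x R) (-R)) ^ r| ≤ |x| ^ r + |max (min x R) (-R)| ^ r := by
        calc |x ^ r - (max (min x R) (-R)) ^ r| ≤ |x ^ r| + |(max (min x R) (-R)) ^ r| :=
              abs_sub _ _
          _ = |x| ^ r + |max (min x R) (-R)| ^ r := by rw [abs_pow, abs_pow]
      have hclamp : |max (min x R) (-R)| ≤ R :=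
        abs_le.mpr ⟨le_max_right _ _, max_le (min_le_right _ _) (by linarith)⟩
      have h2 : |max (min x R) (-R)| ^ r ≤ |x| ^ r :=
        pow_le_pow_left₀ (abs_nonneg _) (hclamp.trans hx.le) r
      have h3 : R ^ 2 * |x| ^ r ≤ |x| ^ (r + 2) := by
        have hRX : R ^ 2 ≤ |x| ^ 2 := pow_le_pow_left₀ hR.le hx.le 2
        calc R ^ 2 * |x| ^ r ≤ |x| ^ 2 * |x| ^ r := by
              have := pow_nonneg (abs_nonneg x) r
              nlinarith
          _ = |x| ^ (r + 2) := by rw [← pow_add]; ring_nf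
      have hfinal : |x| ^ r + |x| ^ r ≤ 2 / R ^ 2 * |x| ^ (r + 2) := by
        rw [div_mul_eq_mul_div, le_div_iff₀ (by positivity : (0:ℝ) < R ^ 2)]
        nlinarith [h3]
      linarith
  have hbint : Integrable (fun x => (bcfClampPow r R) x) ξ := (bcfClampPow r R).integrable ξ
  calc |(∫ x, x ^ r ∂ξ) - ∫ x, bcfClampPow r R x ∂ξ|
      = |∫ x, (x ^ r - bcfClampPow r R x) ∂ξ| := by rw [integral_sub hi hbint]
    _ ≤ ∫ x, |x ^ r - bcfClampPow r R x| ∂ξ := by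
        have := norm_integral_le_integral_norm (μ := ξ)
          (f := fun x => x ^ r - bcfClampPow r R x)
        simpa [Real.norm_eq_abs] using this
    _ ≤ ∫ x, 2 / R ^ 2 * |x| ^ (r + 2) ∂ξ :=
        integral_mono ((hi.sub hbint).abs) (hi2.const_mul _) hpt
    _ = 2 / R ^ 2 * ∫ x, |x| ^ (r + 2) ∂ξ := integral_const_mul _ _
    _ ≤ 2 / R ^ 2 * C := by gcongr

/-- Moments pass to the weak limit. -/
lemma mom_limit (κ : ℕ → Measure ℝ) (hp : ∀ n, IsProbabilityMeasure (κ n))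
    (hint : ∀ n r, Integrable (fun x => x ^ r) (κ n)) (m : ℕ → ℝ)
    (hm : ∀ r, Tendsto (fun n => ∫ x, x ^ r ∂(κ n)) atTop (𝓝 (m r)))
    (ρ : Measure ℝ) (hρ : IsProbabilityMeasure ρ)
    (hw : ∀ f : ℝ →ᵇ ℝ, Tendsto (fun n => ∫ x, f x ∂(κ n)) atTop (𝓝 (∫ x, f x ∂ρ))) :
    (∀ r, Integrable (fun x => x ^ r) ρ) ∧ ∀ r, ∫ x, x ^ r ∂ρ = m r := by
  haveI := hρ
  have habs : ∀ n p, Integrable (fun x => |x| ^ p) (κ n) := by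
    intro n p
    have := (hint n p).abs
    simpa only [abs_pow] using this
  have hCr : ∀ p, ∃ C : ℝ, 0 ≤ C ∧ ∀ n, ∫ x, |x| ^ p ∂(κ n) ≤ C := by
    intro p
    obtain ⟨B, hB⟩ := (hm (2 * p)).bddAbove_range
    have hB' : ∀ n, ∫ x, x ^ (2 * p) ∂(κ n) ≤ B := fun n => hB (mem_range_self n)
    have hB0 : (0:ℝ) ≤ B := by
      refine le_trans ?_ (hB' 0)
      refine integral_nonneg fun x => ?_
      rw [pow_mul]
      exact pow_nonneg (sq_nonneg x) p
    refine ⟨1 + B, by linarith, fun n => ?_⟩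
    haveI := hp n
    have hpt : ∀ x : ℝ, |x| ^ p ≤ 1 + x ^ (2 * p) := by
      intro x
      have h2 : |x| ^ (2 * p) = x ^ (2 * p) := by rw [pow_mul, pow_mul, sq_abs]
      rcases le_or_gt (|x|) 1 with hx | hx
      · have h1 : |x| ^ p ≤ 1 := pow_le_one₀ (abs_nonneg x) hx
        have h3 : (0:ℝ) ≤ x ^ (2 * p) := by rw [pow_mul]; exact pow_nonneg (sq_nonneg x) p
        linarith
      · have h1 : |x| ^ p ≤ |x| ^ (2 * p) := pow_le_pow_right₀ hx.le (by omega)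
        linarith [h2 ▸ h1]
    calc ∫ x, |x| ^ p ∂(κ n) ≤ ∫ x, (1 + x ^ (2 * p)) ∂(κ n) :=
          integral_mono (habs n p) ((integrable_const 1).add (hint n (2 * p))) hpt
      _ = 1 + ∫ x, x ^ (2 * p) ∂(κ n) := by
          rw [integral_add (integrable_const 1) (hint n (2 * p))]
          simp
      _ ≤ 1 + B := by linarith [hB' n]
  have hInt : ∀ r, Integrable (fun x => x ^ r) ρ := by
    intro r
    obtain ⟨C, hC0, hC⟩ := hCr r
    have h := (mom_int_le κ hp habs ρ hρ hw r hC0 hC).1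
    refine h.mono' ((continuous_pow r).measurable.aestronglyMeasurable)
      (Eventually.of_forall fun x => ?_)
    rw [Real.norm_eq_abs, abs_pow]
  refine ⟨hInt, fun r => ?_⟩
  obtain ⟨C, hC0, hC⟩ := hCr (r + 2)
  obtain ⟨hiρ2, hρC⟩ := mom_int_le κ hp habs ρ hρ hw (r + 2) hC0 hC
  have key : ∀ ε > 0, |(∫ x, x ^ r ∂ρ) - m r| ≤ ε := by
    intro ε hε
    set R : ℝ := max 1 (Real.sqrt (4 * C / ε)) with hRdef
    have hR : 0 < R := lt_of_lt_of_le one_pos (le_max_left _ _)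
    have hR2 : 4 * C / R ^ 2 ≤ ε := by
      rw [div_le_iff₀ (by positivity)]
      have h1 : Real.sqrt (4 * C / ε) ≤ R := le_max_right _ _
      have h2 : 4 * C / ε ≤ R ^ 2 := by
        have h3 := Real.sq_sqrt (by positivity : (0:ℝ) ≤ 4 * C / ε)
        nlinarith [Real.sqrt_nonneg (4 * C / ε)]
      calc 4 * C = (4 * C / ε) * ε := by field_simp
        _ ≤ R ^ 2 * ε := by gcongr
        _ = ε * R ^ 2 := mul_comm _ _
    have herrn : ∀ n, |(∫ x, x ^ r ∂(κ n)) - ∫ x, bcfClampPow r R x ∂(κ n)| ≤ 2 / R ^ 2 * C := by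
      intro n
      haveI := hp n
      exact mom_trunc_err (κ n) r hR (hint n r) (habs n (r + 2)) (hC n)
    have herrρ : |(∫ x, x ^ r ∂ρ) - ∫ x, bcfClampPow r R x ∂ρ| ≤ 2 / R ^ 2 * C :=
      mom_trunc_err ρ r hR (hInt r) hiρ2 hρC
    have hlim : |m r - ∫ x, bcfClampPow r R x ∂ρ| ≤ 2 / R ^ 2 * C := by
      have ht : Tendsto (fun n => |(∫ x, x ^ r ∂(κ n)) - ∫ x, bcfClampPow r R x ∂(κ n)|)
          atTop (𝓝 |m r - ∫ x, bcfClampPow r R x ∂ρ|) := ((hm r).sub (hw _)).abs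
      exact le_of_tendsto ht (Eventually.of_forall herrn)
    calc |(∫ x, x ^ r ∂ρ) - m r|
        ≤ |(∫ x, x ^ r ∂ρ) - ∫ x, bcfClampPow r R x ∂ρ|
          + |(∫ x, bcfClampPow r R x ∂ρ) - m r| := abs_sub_le _ _ _
      _ ≤ 2 / R ^ 2 * C + 2 / R ^ 2 * C := by
          rw [abs_sub_comm (∫ x, bcfClampPow r R x ∂ρ) (m r)]
          linarith
      _ = 4 * C / R ^ 2 := by ring
      _ ≤ ε := hR2
  by_contra hne
  have habs0 : 0 < |(∫ x, x ^ r ∂ρ) - m r| := abs_pos.mpr (sub_ne_zero.mpr hne)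
  have := key (|(∫ x, x ^ r ∂ρ) - m r| / 2) (by linarith)
  linarith

/-- Method of moments: if all moments converge and the limit moment sequence
determines a unique probability measure μ, then μ_n converges weakly to μ. -/
theorem weak_convergence_of_moment_convergence
    (μ : ℕ → Measure ℝ) (hprob : ∀ n, IsProbabilityMeasure (μ n))
    (hint : ∀ n, ∀ r : ℕ, Integrable (fun x => x ^ r) (μ n))
    (m : ℕ → ℝ)
    (hconv : ∀ r : ℕ, Tendsto (fun n => ∫ x, x ^ r ∂(μ n)) atTop (nhds (m r)))
    (ν : Measure ℝ) (hνprob : IsProbabilityMeasure ν)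
    (hνint : ∀ r : ℕ, Integrable (fun x => x ^ r) ν)
    (hνmom : ∀ r : ℕ, ∫ x, x ^ r ∂ν = m r)
    (huniq : ∀ ν' : Measure ℝ, IsProbabilityMeasure ν' →
      (∀ r : ℕ, Integrable (fun x => x ^ r) ν') →
      (∀ r : ℕ, ∫ x, x ^ r ∂ν' = m r) → ν' = ν) :
    ∀ f : BoundedContinuousFunction ℝ ℝ,
      Tendsto (fun n => ∫ x, f x ∂(μ n)) atTop (nhds (∫ x, f x ∂ν)) := by
  intro f
  apply tendsto_of_subseq_tendsto
  intro ns hns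
  set κ : ℕ → Measure ℝ := fun n => μ (ns n) with hκdef
  have hκp : ∀ n, IsProbabilityMeasure (κ n) := fun n => hprob _
  have hκint : ∀ n r, Integrable (fun x => x ^ r) (κ n) := fun n r => hint _ r
  have hκm : ∀ r, Tendsto (fun n => ∫ x, x ^ r ∂(κ n)) atTop (𝓝 (m r)) :=
    fun r => (hconv r).comp hns
  obtain ⟨C, hC⟩ := (hκm 2).bddAbove_range
  have hC' : ∀ n, ∫ x, x ^ 2 ∂(κ n) ≤ C := fun n => hC (Set.mem_range_self n)
  obtain ⟨ms, hms, ρ, hρp, hweak⟩ := mom_helly κ hκp (fun n => hκint n 2) hC'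
  have hsub : ∀ r, Tendsto (fun n => ∫ x, x ^ r ∂(κ (ms n))) atTop (𝓝 (m r)) :=
    fun r => (hκm r).comp hms.tendsto_atTop
  obtain ⟨hρint, hρmom⟩ := mom_limit (fun n => κ (ms n)) (fun n => hκp _)
    (fun n r => hκint _ r) m hsub ρ hρp hweak
  have hρν : ρ = ν := huniq ρ hρp hρint hρmom
  exact ⟨ms, hρν ▸ hweak f⟩
end

section
/- For any two real symmetric p×p matrices A and B, the Kolmogorov distance between their empirical spectral distributions is at most rank(A−B)/p. -/
/-! Let `V` be spanned by the eigenvectors of `A` with eigenvalue `≤ x`, `W` by those of `B` with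
eigenvalue `> x`, and `K = ker (A - B)`. On `V ⊓ W ⊓ K` the Rayleigh quotients of `A` and `B`
coincide, yet one is `≤ x` and the other `> x`; so this intersection is trivial, and counting
dimensions gives `#{i | λᵢ(A) ≤ x} ≤ #{i | λᵢ(B) ≤ x} + rank (A - B)`. With `A` and `B` swapped this
bounds the difference of the two distribution functions at every `x` by `rank (A - B) / p`. -/

open MeasureTheory

/-- Empirical spectral distribution of a Hermitian matrix. -/
noncomputable def esd {p : ℕ} (A : Matrix (Fin p) (Fin p) ℝ) (hA : A.IsHermitian) :
    Measure ℝ :=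
  ((p : ENNReal))⁻¹ • ∑ i : Fin p, Measure.dirac (hA.eigenvalues i)

/-- Kolmogorov distance between two measures on ℝ. -/
noncomputable def kolmogorovDist (μ ν : Measure ℝ) : ℝ :=
  ⨆ x : ℝ, |(μ (Set.Iic x)).toReal - (ν (Set.Iic x)).toReal|

open Module Submodule Finset
open scoped RealInnerProductSpace

theorem Submodule.finrank_add_finrank_add_finrank_le_of_disjoint {K V : Type*} [DivisionRing K]
    [AddCommGroup V] [Module K V] [FiniteDimensional K V] {U W X : Submodule K V}
    (h : Disjoint U (W ⊓ X)) :
    finrank K U + finrank K W + finrank K X ≤ 2 * finrank K V := by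
  have h₁ := finrank_add_finrank_le_of_disjoint h
  have h₂ := finrank_sup_add_finrank_inf_eq W X
  have h₃ := finrank_le (W ⊔ X)
  omega

namespace OrthonormalBasis

variable {ι 𝕜 E : Type*} [Fintype ι] [RCLike 𝕜] [NormedAddCommGroup E] [InnerProductSpace 𝕜 E]
  (b : OrthonormalBasis ι 𝕜 E)

theorem inner_eq_zero_of_mem_span_image {s : Set ι} {v : E} (hv : v ∈ span 𝕜 (b '' s))
    {i : ι} (hi : i ∉ s) : inner 𝕜 (b i) v = 0 := by
  have hle : span 𝕜 (b '' s) ≤ (𝕜 ∙ b i)ᗮ := by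
    rw [span_le]
    rintro _ ⟨j, hj, rfl⟩
    exact mem_orthogonal_singleton_iff_inner_right.2 (b.orthonormal.2 fun h => hi (h ▸ hj))
  exact mem_orthogonal_singleton_iff_inner_right.1 (hle hv)

theorem finrank_span_image (s : Finset ι) : finrank 𝕜 (span 𝕜 (b '' s)) = #s := by
  have hrange : b '' s = Set.range (b ∘ ((↑) : s → ι)) := by
    rw [Set.range_comp, Subtype.range_coe]
  rw [hrange, finrank_span_eq_card
    (b.orthonormal.linearIndependent.comp _ Subtype.val_injective), Fintype.card_coe]

end OrthonormalBasis

namespace LinearMap.IsSymmetric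

variable {ι E : Type*} [Fintype ι] [NormedAddCommGroup E] [InnerProductSpace ℝ E]
  {T : E →ₗ[ℝ] E} {μ : ι → ℝ}

theorem inner_map_self_eq_sum (hT : T.IsSymmetric) (b : OrthonormalBasis ι ℝ E)
    (hb : ∀ i, T (b i) = μ i • b i) (v : E) : ⟪T v, v⟫ = ∑ i, μ i * ⟪b i, v⟫ ^ 2 := by
  rw [← b.sum_inner_mul_inner]
  refine sum_congr rfl fun i _ => ?_
  rw [hT, hb, real_inner_smul_right, real_inner_comm]
  ring

theorem inner_map_self_le_of_mem_span (hT : T.IsSymmetric) (b : OrthonormalBasis ι ℝ E)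
    (hb : ∀ i, T (b i) = μ i • b i) {x : ℝ} {s : Set ι} (hs : ∀ i ∈ s, μ i ≤ x) {v : E}
    (hv : v ∈ span ℝ (b '' s)) : ⟪T v, v⟫ ≤ x * ‖v‖ ^ 2 := by
  rw [hT.inner_map_self_eq_sum b hb, ← b.sum_sq_inner_right, mul_sum]
  refine sum_le_sum fun i _ => ?_
  by_cases hi : i ∈ s
  · exact mul_le_mul_of_nonneg_right (hs i hi) (sq_nonneg _)
  · simp [b.inner_eq_zero_of_mem_span_image hv hi]

theorem lt_inner_map_self_of_mem_span (hT : T.IsSymmetric) (b : OrthonormalBasis ι ℝ E)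
    (hb : ∀ i, T (b i) = μ i • b i) {x : ℝ} {s : Set ι} (hs : ∀ i ∈ s, x < μ i) {v : E}
    (hv : v ∈ span ℝ (b '' s)) (hv₀ : v ≠ 0) : x * ‖v‖ ^ 2 < ⟪T v, v⟫ := by
  rw [hT.inner_map_self_eq_sum b hb, ← b.sum_sq_inner_right, mul_sum]
  obtain ⟨j, hj⟩ : ∃ j, ⟪b j, v⟫ ≠ 0 := by
    by_contra! h
    exact hv₀ (by simpa [h] using (b.sum_repr' v).symm)
  have hjs : j ∈ s := by_contra fun h => hj (b.inner_eq_zero_of_mem_span_image hv h)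
  refine sum_lt_sum (fun i _ => ?_) ⟨j, mem_univ j, ?_⟩
  · by_cases hi : i ∈ s
    · exact mul_le_mul_of_nonneg_right (hs i hi).le (sq_nonneg _)
    · simp [b.inner_eq_zero_of_mem_span_image hv hi]
  · exact mul_lt_mul_of_pos_right (hs j hjs) (sq_pos_of_ne_zero hj)

theorem card_le_card_add_finrank_range_sub [FiniteDimensional ℝ E] {κ : Type*} [Fintype κ]
    {S : E →ₗ[ℝ] E} (hT : T.IsSymmetric) (hS : S.IsSymmetric) (b : OrthonormalBasis ι ℝ E)
    (c : OrthonormalBasis κ ℝ E) {ν : κ → ℝ} (hb : ∀ i, T (b i) = μ i • b i)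
    (hc : ∀ j, S (c j) = ν j • c j) (x : ℝ) :
    #{i | μ i ≤ x} ≤ #{j | ν j ≤ x} + finrank ℝ (LinearMap.range (T - S)) := by
  set I : Finset ι := {i | μ i ≤ x}
  set J : Finset κ := {j | ¬ν j ≤ x}
  have hdisj : Disjoint (span ℝ (b '' I)) (span ℝ (c '' J) ⊓ ker (T - S)) := by
    rw [disjoint_def]
    rintro v hvI ⟨hvJ, hvK⟩
    by_contra hv₀
    have hTS : T v = S v := sub_eq_zero.1 hvK
    have hle := hT.inner_map_self_le_of_mem_span b hb (fun i hi => (mem_filter.1 hi).2) hvI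
    have hlt := hS.lt_inner_map_self_of_mem_span c hc
      (fun j hj => not_le.1 (mem_filter.1 hj).2) hvJ hv₀
    rw [hTS] at hle
    linarith
  have hI := b.finrank_span_image I
  have hJ := c.finrank_span_image J
  have hκ : #J + #{j | ν j ≤ x} = finrank ℝ E := by
    rw [add_comm, card_filter_add_card_filter_not, card_univ, finrank_eq_card_basis c.toBasis]
  have hrank := (T - S).finrank_range_add_finrank_ker
  have := finrank_add_finrank_add_finrank_le_of_disjoint hdisj
  omega

end LinearMap.IsSymmetric

namespace Matrix

theorem rank_eq_finrank_range_toEuclideanLin {m n 𝕜 : Type*} [Fintype m] [Fintype n]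
    [DecidableEq n] [RCLike 𝕜] (M : Matrix m n 𝕜) :
    M.rank = finrank 𝕜 (LinearMap.range (toEuclideanLin M)) :=
  M.rank_eq_finrank_range_toLin (PiLp.basisFun 2 𝕜 m) (PiLp.basisFun 2 𝕜 n)

theorem rank_sub_comm {m n 𝕜 : Type*} [Fintype m] [Fintype n] [DecidableEq n] [RCLike 𝕜]
    (A B : Matrix m n 𝕜) : (A - B).rank = (B - A).rank := by
  rw [rank_eq_finrank_range_toEuclideanLin, rank_eq_finrank_range_toEuclideanLin, ← neg_sub,
    map_neg, LinearMap.range_neg]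

namespace IsHermitian

variable {n : Type*} [Fintype n] [DecidableEq n] {A B : Matrix n n ℝ}

theorem toEuclideanLin_eigenvectorBasis (hA : A.IsHermitian) (i : n) :
    toEuclideanLin A (hA.eigenvectorBasis i) = hA.eigenvalues i • hA.eigenvectorBasis i :=
  WithLp.ofLp_injective 2 (by simpa [toLpLin_apply] using hA.mulVec_eigenvectorBasis i)

theorem card_eigenvalues_le_le_card_add_rank_sub (hA : A.IsHermitian) (hB : B.IsHermitian)
    (x : ℝ) : #{i | hA.eigenvalues i ≤ x} ≤ #{i | hB.eigenvalues i ≤ x} + (A - B).rank := by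
  rw [rank_eq_finrank_range_toEuclideanLin, map_sub]
  exact (isSymmetric_toEuclideanLin_iff.2 hA).card_le_card_add_finrank_range_sub
    (isSymmetric_toEuclideanLin_iff.2 hB) hA.eigenvectorBasis hB.eigenvectorBasis
    hA.toEuclideanLin_eigenvectorBasis hB.toEuclideanLin_eigenvectorBasis x

end IsHermitian

end Matrix

theorem esd_Iic_toReal {p : ℕ} (A : Matrix (Fin p) (Fin p) ℝ) (hA : A.IsHermitian) (x : ℝ) :
    (esd A hA (Set.Iic x)).toReal = #{i | hA.eigenvalues i ≤ x} / p := by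
  simp only [esd, Measure.smul_apply, Measure.finsetSum_apply,
    Measure.dirac_apply' _ measurableSet_Iic, Set.indicator_apply, Set.mem_Iic, Pi.one_apply,
    sum_boole, smul_eq_mul, ENNReal.toReal_mul, ENNReal.toReal_inv, ENNReal.toReal_natCast,
    inv_mul_eq_div]

theorem kolmogorov_esd_le_rank_general {p : ℕ}
    (A B : Matrix (Fin p) (Fin p) ℝ) (hA : A.IsHermitian) (hB : B.IsHermitian) :
    kolmogorovDist (esd A hA) (esd B hB) ≤ ((A - B).rank : ℝ) / p := by
  refine ciSup_le fun x => ?_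
  rw [esd_Iic_toReal, esd_Iic_toReal, ← sub_div, abs_div, Nat.abs_cast]
  gcongr
  have hAB := hA.card_eigenvalues_le_le_card_add_rank_sub hB x
  have hBA := hB.card_eigenvalues_le_le_card_add_rank_sub hA x
  rw [Matrix.rank_sub_comm] at hBA
  rw [abs_sub_le_iff, sub_le_iff_le_add', sub_le_iff_le_add']
  exact ⟨by exact_mod_cast hAB, by exact_mod_cast hBA⟩

/-- Theorem A.43 of Bai–Silverstein: the Kolmogorov distance between the empirical
spectral distributions of two symmetric matrices is at most rank(A−B)/p. -/
theorem kolmogorov_esd_le_rank {p : ℕ} (hp : 0 < p)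
    (A B : Matrix (Fin p) (Fin p) ℝ) (hA : A.IsHermitian) (hB : B.IsHermitian) :
    kolmogorovDist (esd A hA) (esd B hB) ≤ ((A - B).rank : ℝ) / p :=
  kolmogorov_esd_le_rank_general A B hA hB
end

section
/- For any two real symmetric (Hermitian) p×p matrices A and B, the cube of the Lévy distance between their empirical spectral distributions is at most (1/p)·tr((A−B)(A−B)*). -/
/-! Conjugating by the eigenvector bases `U`, `V` of `A`, `B` writes `tr((A - B)(A - B)ᵀ)` as
`∑ᵢⱼ (λᵢ - μⱼ)² Sᵢⱼ`, where `Sᵢⱼ = ((UᵀV)ᵢⱼ)²` is doubly stochastic. This is linear in `S`, so by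
Birkhoff's theorem it is at least its value at some permutation matrix: there is a matching `σ`
with `∑ᵢ (λᵢ - μ_{σ i})² ≤ tr((A - B)(A - B)ᵀ)` (Hoffman–Wielandt). For any matching of the atoms,
at most `∑ᵢ (λᵢ - μ_{σ i})² / ε²` of them move by more than `ε`, so the two empirical distribution
functions agree up to a shift by `ε` and an error `ε` once that sum is at most `p ε³`. -/

open MeasureTheory Matrix

/-- Lévy distance between two measures on ℝ. -/
noncomputable def levyDist (μ ν : Measure ℝ) : ℝ :=
  sInf {ε : ℝ | 0 < ε ∧ ∀ x : ℝ,
    (μ (Set.Iic (x - ε))).toReal - ε ≤ (ν (Set.Iic x)).toReal ∧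
    (ν (Set.Iic x)).toReal ≤ (μ (Set.Iic (x + ε))).toReal + ε}

namespace Matrix

variable {m n R : Type*} [Fintype m] [Fintype n]

theorem trace_mul_transpose_self_eq_sum_sq [CommSemiring R] (M : Matrix m n R) :
    trace (M * Mᵀ) = ∑ i, ∑ j, M i j ^ 2 := by
  simp [trace, mul_apply, sq]

variable [DecidableEq n]

theorem trace_mul_transpose_self_conj [CommRing R] [StarRing R] [TrivialStar R]
    {U V : Matrix n n R} (hU : U ∈ unitaryGroup n R) (hV : V ∈ unitaryGroup n R)
    (M : Matrix n n R) :
    trace (star U * M * V * (star U * M * V)ᵀ) = trace (M * Mᵀ) := by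
  have htranspose : (star U * M * V)ᵀ = star V * Mᵀ * U := by
    simp only [← conjTranspose_eq_transpose_of_trivial, star_eq_conjTranspose, conjTranspose_mul,
      conjTranspose_conjTranspose, Matrix.mul_assoc]
  calc trace (star U * M * V * (star U * M * V)ᵀ)
      = trace (star U * (M * (V * star V) * Mᵀ) * U) := by
        rw [htranspose]; simp only [Matrix.mul_assoc]
    _ = trace (U * star U * (M * (V * star V) * Mᵀ)) := trace_mul_cycle _ _ _
    _ = trace (M * Mᵀ) := by
        rw [mem_unitaryGroup_iff.mp hU, mem_unitaryGroup_iff.mp hV, Matrix.mul_one, Matrix.one_mul]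

theorem sq_apply_mem_doublyStochastic {W : Matrix n n ℝ} (hW : W ∈ unitaryGroup n ℝ) :
    of (fun i j => W i j ^ 2) ∈ doublyStochastic ℝ n := by
  rw [mem_doublyStochastic_iff_sum]
  refine ⟨fun i j => sq_nonneg _, fun i => ?_, fun j => ?_⟩
  · simpa [mul_apply, sq] using congr_fun (congr_fun (mem_unitaryGroup_iff.mp hW) i) i
  · simpa [mul_apply, sq] using congr_fun (congr_fun (mem_unitaryGroup_iff'.mp hW) j) j

theorem exists_perm_sum_le_of_mem_doublyStochastic (c : n → n → ℝ) {S : Matrix n n ℝ}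
    (hS : S ∈ doublyStochastic ℝ n) :
    ∃ σ : Equiv.Perm n, ∑ i, c i (σ i) ≤ ∑ i, ∑ j, c i j * S i j := by
  let f : Matrix n n ℝ →ₗ[ℝ] ℝ := ∑ i, ∑ j, c i j • entryLinearMap ℝ ℝ i j
  rw [← SetLike.mem_coe, doublyStochastic_eq_convexHull_permMatrix] at hS
  obtain ⟨_, ⟨σ, rfl⟩, hσ⟩ :=
    (f.concaveOn convex_univ).exists_le_of_mem_convexHull (Set.subset_univ _) hS
  refine ⟨σ, ?_⟩
  simpa [f, Equiv.Perm.permMatrix, PEquiv.toMatrix_apply] using hσ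

namespace IsHermitian

variable {A B : Matrix n n ℝ}

theorem eq_eigenvectorUnitary_mul_diagonal_mul_star (hA : A.IsHermitian) :
    A = hA.eigenvectorUnitary * diagonal hA.eigenvalues
      * star (hA.eigenvectorUnitary : Matrix n n ℝ) := by
  simpa using hA.spectral_theorem

theorem mul_eigenvectorUnitary (hA : A.IsHermitian) :
    A * hA.eigenvectorUnitary = hA.eigenvectorUnitary * diagonal hA.eigenvalues := by
  rw [congrArg (· * _) hA.eq_eigenvectorUnitary_mul_diagonal_mul_star, Matrix.mul_assoc,
    Unitary.coe_star_mul_self, Matrix.mul_one]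

theorem star_eigenvectorUnitary_mul (hA : A.IsHermitian) :
    star (hA.eigenvectorUnitary : Matrix n n ℝ) * A
      = diagonal hA.eigenvalues * star (hA.eigenvectorUnitary : Matrix n n ℝ) := by
  rw [congrArg (_ * ·) hA.eq_eigenvectorUnitary_mul_diagonal_mul_star, ← Matrix.mul_assoc,
    ← Matrix.mul_assoc, Unitary.coe_star_mul_self, Matrix.one_mul]

theorem exists_mem_doublyStochastic_trace_eq (hA : A.IsHermitian) (hB : B.IsHermitian) :
    ∃ S ∈ doublyStochastic ℝ n, trace ((A - B) * (A - B)ᵀ)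
      = ∑ i, ∑ j, (hA.eigenvalues i - hB.eigenvalues j) ^ 2 * S i j := by
  set U : Matrix n n ℝ := ↑hA.eigenvectorUnitary
  set V : Matrix n n ℝ := ↑hB.eigenvectorUnitary
  have hW : star U * V ∈ unitaryGroup n ℝ :=
    mul_mem (Unitary.star_mem hA.eigenvectorUnitary.2) hB.eigenvectorUnitary.2
  refine ⟨_, sq_apply_mem_doublyStochastic hW, ?_⟩
  have hconj : star U * (A - B) * V
      = diagonal hA.eigenvalues * (star U * V) - star U * V * diagonal hB.eigenvalues := by
    rw [Matrix.mul_sub, Matrix.sub_mul, hA.star_eigenvectorUnitary_mul, Matrix.mul_assoc (star U),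
      hB.mul_eigenvectorUnitary]
    simp only [U, V, Matrix.mul_assoc]
  rw [← trace_mul_transpose_self_conj hA.eigenvectorUnitary.2 hB.eigenvectorUnitary.2, hconj,
    trace_mul_transpose_self_eq_sum_sq]
  simp only [sub_apply, diagonal_mul, mul_diagonal, of_apply]
  congr! 2 with i - j -
  ring

theorem exists_perm_sum_sq_sub_eigenvalues_le (hA : A.IsHermitian) (hB : B.IsHermitian) :
    ∃ σ : Equiv.Perm n,
      ∑ i, (hA.eigenvalues i - hB.eigenvalues (σ i)) ^ 2 ≤ trace ((A - B) * (A - B)ᵀ) := by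
  obtain ⟨S, hS, htrace⟩ := hA.exists_mem_doublyStochastic_trace_eq hB
  rw [htrace]
  exact exists_perm_sum_le_of_mem_doublyStochastic
    (fun i j => (hA.eigenvalues i - hB.eigenvalues j) ^ 2) hS

end IsHermitian

end Matrix

section EmpiricalMeasure

open Finset

variable {p : ℕ}

noncomputable def empiricalMeasure (f : Fin p → ℝ) : Measure ℝ :=
  ((p : ENNReal))⁻¹ • ∑ i, Measure.dirac (f i)

theorem esd_eq_empiricalMeasure {A : Matrix (Fin p) (Fin p) ℝ} (hA : A.IsHermitian) :
    esd A hA = empiricalMeasure hA.eigenvalues :=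
  rfl

theorem empiricalMeasure_comp_perm (f : Fin p → ℝ) (σ : Equiv.Perm (Fin p)) :
    empiricalMeasure (f ∘ σ) = empiricalMeasure f := by
  rw [empiricalMeasure, empiricalMeasure, ← Equiv.sum_comp σ fun i => Measure.dirac (f i)]
  rfl

theorem empiricalMeasure_Iic_toReal (f : Fin p → ℝ) (x : ℝ) :
    (empiricalMeasure f (Set.Iic x)).toReal = #{i | f i ≤ x} / p := by
  simp only [empiricalMeasure, Measure.smul_apply, Measure.finsetSum_apply,
    Measure.dirac_apply' _ measurableSet_Iic, Set.indicator_apply, Set.mem_Iic, Pi.one_apply]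
  rw [Finset.sum_boole]
  simp [ENNReal.toReal_mul, div_eq_inv_mul]

theorem card_filter_le_card_filter_add_sum_sq_div {ι : Type*} [Fintype ι] (f g : ι → ℝ)
    {ε : ℝ} (hε : 0 < ε) (x : ℝ) :
    (#{i | g i ≤ x} : ℝ) ≤ #{i | f i ≤ x + ε} + (∑ i, (f i - g i) ^ 2) / ε ^ 2 := by
  classical
  set far := ({i | g i ≤ x} : Finset ι) \ ({i | f i ≤ x + ε} : Finset ι)
  have hsplit : (#{i | g i ≤ x} : ℝ) ≤ #far + #{i | f i ≤ x + ε} := by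
    exact_mod_cast card_le_card_sdiff_add_card
  have hfar : #far • ε ^ 2 ≤ ∑ i, (f i - g i) ^ 2 := by
    refine (card_nsmul_le_sum _ _ _ fun i hi => ?_).trans
      (sum_le_sum_of_subset_of_nonneg (subset_univ _) fun i _ _ => sq_nonneg _)
    simp only [far, mem_sdiff, mem_filter_univ, not_le] at hi
    exact pow_le_pow_left₀ hε.le (by linarith) 2
  rw [nsmul_eq_mul, ← le_div_iff₀ (by positivity)] at hfar
  linarith

theorem empiricalMeasure_Iic_le_add (f g : Fin p → ℝ) {ε : ℝ} (hε : 0 < ε)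
    (hsum : (∑ i, (f i - g i) ^ 2) / p ≤ ε ^ 3) (x : ℝ) :
    (empiricalMeasure g (Set.Iic x)).toReal
      ≤ (empiricalMeasure f (Set.Iic (x + ε))).toReal + ε := by
  have hsum' : (∑ i, (f i - g i) ^ 2) / p / ε ^ 2 ≤ ε := by
    rw [div_le_iff₀ (by positivity)]
    linarith [show ε * ε ^ 2 = ε ^ 3 by ring]
  rw [empiricalMeasure_Iic_toReal, empiricalMeasure_Iic_toReal]
  calc (#{i | g i ≤ x} : ℝ) / p
      ≤ (#{i | f i ≤ x + ε} + (∑ i, (f i - g i) ^ 2) / ε ^ 2) / p := by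
        gcongr; exact card_filter_le_card_filter_add_sum_sq_div f g hε x
    _ = #{i | f i ≤ x + ε} / p + (∑ i, (f i - g i) ^ 2) / p / ε ^ 2 := by ring
    _ ≤ #{i | f i ≤ x + ε} / p + ε := by gcongr

end EmpiricalMeasure

theorem levyDist_nonneg (μ ν : Measure ℝ) : 0 ≤ levyDist μ ν :=
  Real.sInf_nonneg fun _ hε => hε.1.le

theorem levyDist_le_of_forall_lt {μ ν : Measure ℝ} {δ : ℝ} (hδ : 0 ≤ δ)
    (h : ∀ ε, δ < ε → ∀ x : ℝ,
      (μ (Set.Iic (x - ε))).toReal - ε ≤ (ν (Set.Iic x)).toReal ∧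
      (ν (Set.Iic x)).toReal ≤ (μ (Set.Iic (x + ε))).toReal + ε) :
    levyDist μ ν ≤ δ :=
  le_of_forall_gt_imp_ge_of_dense fun ε hε =>
    csInf_le ⟨0, fun _ hε' => hε'.1.le⟩ ⟨hδ.trans_lt hε, h ε hε⟩

theorem levyDist_empiricalMeasure_pow_three_le {p : ℕ} (f g : Fin p → ℝ) :
    levyDist (empiricalMeasure f) (empiricalMeasure g) ^ 3 ≤ (∑ i, (f i - g i) ^ 2) / p := by
  set c := (∑ i, (f i - g i) ^ 2) / p
  have hc : 0 ≤ c := by positivity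
  have hcube : (c ^ (1 / 3 : ℝ)) ^ 3 = c := by
    rw [← Real.rpow_natCast, ← Real.rpow_mul hc]
    norm_num
  have hsymm : (∑ i, (g i - f i) ^ 2) / p = c := by
    simp only [c, sub_sq_comm]
  have hlevy : levyDist (empiricalMeasure f) (empiricalMeasure g) ≤ c ^ (1 / 3 : ℝ) := by
    refine levyDist_le_of_forall_lt (by positivity) fun ε hε x => ?_
    have hε0 : 0 < ε := lt_of_le_of_lt (by positivity) hε
    have hcε : c ≤ ε ^ 3 := hcube ▸ pow_le_pow_left₀ (by positivity) hε.le 3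
    refine ⟨?_, empiricalMeasure_Iic_le_add f g hε0 hcε x⟩
    have hleft := empiricalMeasure_Iic_le_add g f hε0 (hsymm.trans_le hcε) (x - ε)
    rw [sub_add_cancel] at hleft
    linarith
  calc levyDist (empiricalMeasure f) (empiricalMeasure g) ^ 3 ≤ (c ^ (1 / 3 : ℝ)) ^ 3 :=
        pow_le_pow_left₀ (levyDist_nonneg _ _) hlevy 3
    _ = c := hcube

theorem levy_esd_cube_le_trace_general {p : ℕ}
    (A B : Matrix (Fin p) (Fin p) ℝ) (hA : A.IsHermitian) (hB : B.IsHermitian) :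
    (levyDist (esd A hA) (esd B hB)) ^ 3 ≤
      (1 / (p:ℝ)) * Matrix.trace ((A - B) * (A - B)ᵀ) := by
  obtain ⟨σ, hσ⟩ := hA.exists_perm_sum_sq_sub_eigenvalues_le hB
  rw [esd_eq_empiricalMeasure, esd_eq_empiricalMeasure,
    ← empiricalMeasure_comp_perm hB.eigenvalues σ, one_div_mul_eq_div]
  exact (levyDist_empiricalMeasure_pow_three_le _ _).trans (by gcongr; exact hσ)

/-- Corollary A.41 of Bai–Silverstein: the cube of the Lévy distance between the
empirical spectral distributions of two Hermitian matrices A, B is bounded by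
(1/p)·tr((A−B)(A−B)*). -/
theorem levy_esd_cube_le_trace {p : ℕ} (hp : 0 < p)
    (A B : Matrix (Fin p) (Fin p) ℝ) (hA : A.IsHermitian) (hB : B.IsHermitian) :
    (levyDist (esd A hA) (esd B hB)) ^ 3 ≤
      (1 / (p:ℝ)) * Matrix.trace ((A - B) * (A - B)ᵀ) :=
  levy_esd_cube_le_trace_general A B hA hB
end

section
/- Let X be a real random variable such that E[X^{2l}] ≤ ∑_{r=0}^{2l−1} (1/(r+1)) C(2l,r) C(2l−1,r) y^r for all l ∈ ℕ, where y > 0. Then |X| ≤ (1+√y)² almost surely. -/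
/-!
By the binomial theorem each Marčenko–Pastur moment is at most `((1 + √y) ^ 2) ^ k`, so all even
moments of `|X|` are bounded by the corresponding powers of `t = (1 + √y) ^ 2`. For `c > t`,
Markov's inequality applied to `|X| ^ n` gives `P(|X| ≥ c) ≤ (t / c) ^ n`, which tends to `0`
along the even `n`.
-/

open MeasureTheory Filter Finset

noncomputable def marchenkoPasturMoment (y : ℝ) (k : ℕ) : ℝ :=
  ∑ r ∈ range k, (1 / ((r : ℝ) + 1)) * (k.choose r) * ((k - 1).choose r) * y ^ r

lemma marchenkoPasturMoment_term_le {y : ℝ} (hy : 0 ≤ y) (k r : ℕ) :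
    (1 / ((r : ℝ) + 1)) * (k.choose r) * ((k - 1).choose r) * y ^ r
      ≤ ((k.choose r : ℝ) * √y ^ r) ^ 2 := by
  have hinv : 1 / ((r : ℝ) + 1) ≤ 1 := by
    rw [div_le_one (by positivity)]
    linarith [r.cast_nonneg (α := ℝ)]
  have hchoose : ((k - 1).choose r : ℝ) ≤ k.choose r := by
    exact_mod_cast Nat.choose_le_choose r (Nat.sub_le k 1)
  calc (1 / ((r : ℝ) + 1)) * (k.choose r) * ((k - 1).choose r) * y ^ r
      ≤ 1 * (k.choose r) * (k.choose r) * y ^ r := by gcongr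
    _ = ((k.choose r : ℝ) * √y ^ r) ^ 2 := by
      rw [mul_pow, ← pow_mul, mul_comm r 2, pow_mul, Real.sq_sqrt hy]
      ring

lemma marchenkoPasturMoment_le {y : ℝ} (hy : 0 ≤ y) (k : ℕ) :
    marchenkoPasturMoment y k ≤ ((1 + √y) ^ 2) ^ k := by
  calc marchenkoPasturMoment y k
      ≤ ∑ r ∈ range k, ((k.choose r : ℝ) * √y ^ r) ^ 2 :=
        sum_le_sum fun r _ => marchenkoPasturMoment_term_le hy k r
    _ ≤ ∑ r ∈ range (k + 1), ((k.choose r : ℝ) * √y ^ r) ^ 2 :=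
        sum_le_sum_of_subset_of_nonneg (range_subset_range.mpr k.le_succ)
          fun _ _ _ => sq_nonneg _
    _ ≤ (∑ r ∈ range (k + 1), (k.choose r : ℝ) * √y ^ r) ^ 2 :=
        sum_sq_le_sq_sum_of_nonneg fun _ _ => by positivity
    _ = ((1 + √y) ^ 2) ^ k := by
      rw [← pow_mul, mul_comm 2 k, pow_mul, add_comm 1 √y, add_pow]
      simp only [one_pow, mul_one]
      exact congrArg (· ^ 2) (sum_congr rfl fun r _ => mul_comm _ _)

section Markov

variable {Ω : Type*} [MeasurableSpace Ω] {μ : Measure Ω} [IsFiniteMeasure μ] {f : Ω → ℝ}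

lemma measureReal_le_le_div_pow_of_integral_pow_le (hf : 0 ≤ᵐ[μ] f) {t c : ℝ} (hc : 0 < c)
    {n : ℕ} (hint : Integrable (fun ω => f ω ^ n) μ) (hmom : ∫ ω, f ω ^ n ∂μ ≤ t ^ n) :
    μ.real {ω | c ≤ f ω} ≤ (t / c) ^ n := by
  have hsub : {ω | c ≤ f ω} ⊆ {ω | c ^ n ≤ f ω ^ n} := fun ω hω =>
    pow_le_pow_left₀ hc.le hω n
  have hmarkov := mul_meas_ge_le_integral_of_nonneg
    (hf.mono fun ω hω => pow_nonneg hω n) hint (c ^ n)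
  rw [div_pow, le_div_iff₀ (by positivity), mul_comm]
  calc c ^ n * μ.real {ω | c ≤ f ω}
      ≤ c ^ n * μ.real {ω | c ^ n ≤ f ω ^ n} :=
        mul_le_mul_of_nonneg_left (measureReal_mono (μ := μ) hsub) (by positivity)
    _ ≤ t ^ n := hmarkov.trans hmom

lemma ae_le_of_frequently_integral_pow_le (hf : 0 ≤ᵐ[μ] f) {t : ℝ} (ht : 0 ≤ t)
    (hmom : ∃ᶠ n in atTop, Integrable (fun ω => f ω ^ n) μ ∧ ∫ ω, f ω ^ n ∂μ ≤ t ^ n) :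
    ∀ᵐ ω ∂μ, f ω ≤ t := by
  rw [ae_le_const_iff_forall_gt_measure_zero]
  intro c htc
  have hc : 0 < c := ht.trans_lt htc
  have hlim : Tendsto (fun n : ℕ => (t / c) ^ n) atTop (nhds 0) :=
    tendsto_pow_atTop_nhds_zero_of_lt_one (by positivity) ((div_lt_one hc).mpr htc)
  have hzero : μ.real {ω | c ≤ f ω} ≤ 0 :=
    ge_of_tendsto_of_frequently hlim <| hmom.mono fun n ⟨hint, hn⟩ =>
      measureReal_le_le_div_pow_of_integral_pow_le hf hc hint hn
  exact (measureReal_eq_zero_iff).mp (le_antisymm hzero measureReal_nonneg)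

end Markov

theorem abs_le_of_mp_moment_bounds_general {Ω : Type*} [MeasurableSpace Ω]
    (μ : Measure Ω) [IsProbabilityMeasure μ] (X : Ω → ℝ)
    (y : ℝ) (hy : 0 < y)
    (hint : ∀ l : ℕ, Integrable (fun ω => X ω ^ (2 * l)) μ)
    (hmom : ∀ l : ℕ, 1 ≤ l →
      (∫ ω, X ω ^ (2 * l) ∂μ) ≤
        ∑ r ∈ Finset.range (2 * l),
          (1 / ((r : ℝ) + 1)) * ((2 * l).choose r) * ((2 * l - 1).choose r) * y ^ r) :
    ∀ᵐ ω ∂μ, |X ω| ≤ (1 + Real.sqrt y) ^ 2 := by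
  refine ae_le_of_frequently_integral_pow_le (ae_of_all _ fun ω => abs_nonneg (X ω))
    (by positivity) (frequently_atTop.mpr fun a => ⟨2 * (a + 1), by omega, ?_⟩)
  simp only [(even_two_mul (a + 1)).pow_abs]
  exact ⟨hint (a + 1),
    (hmom (a + 1) (by omega)).trans (marchenkoPasturMoment_le hy.le (2 * (a + 1)))⟩

/-- If the even moments of a real random variable X are bounded by the corresponding
moments of the Marčenko–Pastur law with parameter y > 0, then |X| ≤ (1+√y)² almost
surely. -/
theorem abs_le_of_mp_moment_bounds {Ω : Type*} [MeasurableSpace Ω]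
    (μ : Measure Ω) [IsProbabilityMeasure μ] (X : Ω → ℝ) (hX : Measurable X)
    (y : ℝ) (hy : 0 < y)
    (hint : ∀ l : ℕ, Integrable (fun ω => X ω ^ (2 * l)) μ)
    (hmom : ∀ l : ℕ, 1 ≤ l →
      (∫ ω, X ω ^ (2 * l) ∂μ) ≤
        ∑ r ∈ Finset.range (2 * l),
          (1 / ((r : ℝ) + 1)) * ((2 * l).choose r) * ((2 * l - 1).choose r) * y ^ r) :
    ∀ᵐ ω ∂μ, |X ω| ≤ (1 + Real.sqrt y) ^ 2 :=
  abs_le_of_mp_moment_bounds_general μ X y hy hint hmom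
end
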